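/- arXiv:1210.6893 — 9 statements merged into one kernel-verified Lean document; each statement's English description precedes it below -/
import Mathlib

section
/- Let 𝒜 and ℬ be two finite σ-structures. The following are equivalent: (i) every {∃,∧}-FO sentence true in 𝒜 is true in ℬ; (ii) there exists a homomorphism from 𝒜 to ℬ. -/
namespace MC

/-- Which logical symbols (beyond ∃, ∧ and relational atoms) are allowed. -/
structure Frag where
  eq : Bool
  ne : Bool
  neg : Bool
  orF : Bool
  allF : Bool

/-- Formulas over a relational signature `σ` (with arities `ar`) in the syntactic
fragment `F`, with `n` free variables (de Bruijn style, quantifiers bind the last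
variable). Atomic relational formulas, conjunction and existential quantification
are always allowed; the other symbols only if enabled in `F`. -/
inductive Fml (σ : Type) (ar : σ → ℕ) (F : Frag) : ℕ → Type
  | rel {n : ℕ} (r : σ) (v : Fin (ar r) → Fin n) : Fml σ ar F n
  | equal {n : ℕ} (h : F.eq = true) (i j : Fin n) : Fml σ ar F n
  | nequal {n : ℕ} (h : F.ne = true) (i j : Fin n) : Fml σ ar F n
  | fnot {n : ℕ} (h : F.neg = true) (φ : Fml σ ar F n) : Fml σ ar F n
  | fand {n : ℕ} (φ ψ : Fml σ ar F n) : Fml σ ar F n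
  | forr {n : ℕ} (h : F.orF = true) (φ ψ : Fml σ ar F n) : Fml σ ar F n
  | fex {n : ℕ} (φ : Fml σ ar F (n + 1)) : Fml σ ar F n
  | fall {n : ℕ} (h : F.allF = true) (φ : Fml σ ar F (n + 1)) : Fml σ ar F n

/-- Satisfaction of a formula in a structure with domain `A` and
interpretation `I`, under a valuation of the free variables. -/
def Sat {σ : Type} {ar : σ → ℕ} {F : Frag} {A : Type}
    (I : ∀ r : σ, (Fin (ar r) → A) → Prop) :
    ∀ {n : ℕ}, Fml σ ar F n → (Fin n → A) → Prop
  | _, .rel r v, val => I r fun i => val (v i)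
  | _, .equal _ i j, val => val i = val j
  | _, .nequal _ i j, val => val i ≠ val j
  | _, .fnot _ φ, val => ¬ Sat I φ val
  | _, .fand φ ψ, val => Sat I φ val ∧ Sat I ψ val
  | _, .forr _ φ ψ, val => Sat I φ val ∨ Sat I ψ val
  | _, .fex φ, val => ∃ a : A, Sat I φ (Fin.snoc val a)
  | _, .fall _ φ, val => ∀ a : A, Sat I φ (Fin.snoc val a)

end MC

namespace MC

/-- `h : A → B` is a homomorphism between the structures `(A, IA)` and `(B, IB)`. -/
def IsHom {σ : Type} {ar : σ → ℕ} {A B : Type}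
    (IA : ∀ r : σ, (Fin (ar r) → A) → Prop)
    (IB : ∀ r : σ, (Fin (ar r) → B) → Prop) (h : A → B) : Prop :=
  ∀ (r : σ) (t : Fin (ar r) → A), IA r t → IB r fun i => h (t i)

/-- The fragment {∃,∧}-FO: primitive positive logic (no equality). -/
def ppFrag : Frag := ⟨false, false, false, false, false⟩

/-- pp formulas are preserved by homomorphisms. -/
lemma sat_of_hom {σ : Type} {ar : σ → ℕ} {A B : Type}
    {IA : ∀ r : σ, (Fin (ar r) → A) → Prop}
    {IB : ∀ r : σ, (Fin (ar r) → B) → Prop} {h : A → B}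
    (hh : IsHom IA IB h) :
    ∀ {n : ℕ} (φ : Fml σ ar ppFrag n) (val : Fin n → A),
      Sat IA φ val → Sat IB φ (h ∘ val) := by
  intro n φ
  induction φ with
  | rel r v => intro val hs; exact hh r (fun i => val (v i)) hs
  | equal hf => simp [ppFrag] at hf
  | nequal hf => simp [ppFrag] at hf
  | fnot hf => simp [ppFrag] at hf
  | fand φ ψ ihφ ihψ => intro val hs; exact ⟨ihφ val hs.1, ihψ val hs.2⟩
  | forr hf => simp [ppFrag] at hf
  | fex φ ih =>
      rintro val ⟨a, ha⟩
      refine ⟨h a, ?_⟩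
      have := ih (Fin.snoc val a) ha
      rwa [Fin.comp_snoc] at this
  | fall hf => simp [ppFrag] at hf

/-- Existentially close a formula with `n` free variables. -/
def exClose {σ : Type} {ar : σ → ℕ} {F : Frag} :
    ∀ {n : ℕ}, Fml σ ar F n → Fml σ ar F 0
  | 0, φ => φ
  | _ + 1, φ => exClose (.fex φ)

lemma sat_exClose {σ : Type} {ar : σ → ℕ} {F : Frag} {A : Type}
    (I : ∀ r : σ, (Fin (ar r) → A) → Prop) :
    ∀ {n : ℕ} (φ : Fml σ ar F n),
      Sat I (exClose φ) Fin.elim0 ↔ ∃ val : Fin n → A, Sat I φ val := by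
  intro n
  induction n with
  | zero =>
      intro φ
      constructor
      · intro hs; exact ⟨Fin.elim0, hs⟩
      · rintro ⟨v, hv⟩
        have : v = Fin.elim0 := funext fun i => i.elim0
        rwa [this] at hv
  | succ n ih =>
      intro φ
      rw [show (exClose φ : Fml σ ar F 0) = exClose (.fex φ) from rfl, ih]
      constructor
      · rintro ⟨v, a, ha⟩; exact ⟨Fin.snoc v a, ha⟩
      · rintro ⟨v, hv⟩
        refine ⟨Fin.init v, v (Fin.last n), ?_⟩
        rwa [Fin.snoc_init_self]

/-- Conjunction of a list of atoms, onto a base formula. -/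
def conjAtoms {σ : Type} {ar : σ → ℕ} {n : ℕ} (base : Fml σ ar ppFrag n) :
    List ((r : σ) × (Fin (ar r) → Fin n)) → Fml σ ar ppFrag n
  | [] => base
  | a :: l => .fand (.rel a.1 a.2) (conjAtoms base l)

lemma sat_conjAtoms {σ : Type} {ar : σ → ℕ} {A : Type}
    (I : ∀ r : σ, (Fin (ar r) → A) → Prop) {n : ℕ}
    (base : Fml σ ar ppFrag n) (l : List ((r : σ) × (Fin (ar r) → Fin n)))
    (val : Fin n → A) :
    Sat I (conjAtoms base l) val ↔
      Sat I base val ∧ ∀ a ∈ l, I a.1 fun i => val (a.2 i) := by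
  induction l with
  | nil => simp [conjAtoms]
  | cons a l ih =>
      simp only [conjAtoms, List.mem_cons]
      constructor
      · rintro ⟨h1, h2⟩
        rw [ih] at h2
        exact ⟨h2.1, fun b hb => by rcases hb with rfl | hb; exact h1; exact h2.2 b hb⟩
      · rintro ⟨h1, h2⟩
        exact ⟨h2 a (Or.inl rfl), ih.mpr ⟨h1, fun b hb => h2 b (Or.inr hb)⟩⟩

/-- Chandra–Merlin: {∃,∧}-FO containment is characterised by homomorphism. -/
theorem pp_containment_iff_hom {σ : Type} [Finite σ] (ar : σ → ℕ)
    {A B : Type} [Finite A] [Finite B] [Nonempty A] [Nonempty B]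
    (IA : ∀ r : σ, (Fin (ar r) → A) → Prop)
    (IB : ∀ r : σ, (Fin (ar r) → B) → Prop) :
    (∀ φ : Fml σ ar ppFrag 0, Sat IA φ Fin.elim0 → Sat IB φ Fin.elim0) ↔
      ∃ h : A → B, IsHom IA IB h := by
  classical
  constructor
  · intro hyp
    by_cases hA : ∀ (r : σ) (t : Fin (ar r) → A), ¬ IA r t
    · exact ⟨fun _ => Classical.arbitrary B, fun r t ht => absurd ht (hA r t)⟩
    · push_neg at hA
      obtain ⟨r₀, t₀, ht₀⟩ := hA
      haveI := Fintype.ofFinite A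
      haveI := Fintype.ofFinite σ
      set nn := Fintype.card A with hnn
      let e : A ≃ Fin nn := Fintype.equivFin A
      let base : Fml σ ar ppFrag nn := .rel r₀ (fun i => e (t₀ i))
      let L : List ((r : σ) × (Fin (ar r) → Fin nn)) :=
        (Finset.univ.filter
          (fun p : (r : σ) × (Fin (ar r) → Fin nn) =>
            IA p.1 fun i => e.symm (p.2 i))).toList
      have hL : ∀ p : (r : σ) × (Fin (ar r) → Fin nn),
          p ∈ L ↔ IA p.1 fun i => e.symm (p.2 i) := by
        intro p
        simp [L, Finset.mem_toList]
      have hsatA : Sat IA (exClose (conjAtoms base L)) Fin.elim0 := by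
        rw [sat_exClose]
        refine ⟨fun i => e.symm i, ?_⟩
        rw [sat_conjAtoms]
        constructor
        · show IA r₀ fun i => e.symm (e (t₀ i))
          simpa using ht₀
        · intro a ha
          exact (hL a).mp ha
      have hsatB := hyp _ hsatA
      rw [sat_exClose] at hsatB
      obtain ⟨val, hval⟩ := hsatB
      rw [sat_conjAtoms] at hval
      refine ⟨fun a => val (e a), ?_⟩
      intro r t ht
      have hmem : (⟨r, fun i => e (t i)⟩ : (r : σ) × (Fin (ar r) → Fin nn)) ∈ L := by
        rw [hL]
        simpa using ht
      exact hval.2 _ hmem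
  · rintro ⟨h, hh⟩ φ hs
    have := sat_of_hom hh φ Fin.elim0 hs
    have he : (h ∘ Fin.elim0 : Fin 0 → B) = Fin.elim0 := funext fun i => i.elim0
    rwa [he] at this

end MC
end

section
/- Let 𝒜 and ℬ be two finite σ-structures. The following are equivalent: (i) 𝒜 and ℬ are homomorphically equivalent; (ii) 𝒜 and ℬ satisfy exactly the same {∃,∧}-FO sentences; (iii) 𝒜 and ℬ satisfy exactly the same {∃,∧,=}-FO sentences; (iv) 𝒜 and ℬ satisfy exactly the same {∃,∧,∨}-FO sentences; (v) 𝒜 and ℬ satisfy exactly the same {∃,∧,∨,=}-FO sentences. -/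
namespace MC

/-- The fragment {∃,∧,=}-FO. -/
def ppEqFrag : Frag := ⟨true, false, false, false, false⟩
/-- The fragment {∃,∧,∨}-FO. -/
def ppOrFrag : Frag := ⟨false, false, false, true, false⟩
/-- The fragment {∃,∧,∨,=}-FO. -/
def ppOrEqFrag : Frag := ⟨true, false, false, true, false⟩

section

variable {σ : Type} {ar : σ → ℕ}

def Frag.IsExistentialPositive (F : Frag) : Prop :=
  F.ne = false ∧ F.neg = false ∧ F.allF = false

def Fml.exs {F : Frag} : ∀ {n : ℕ}, Fml σ ar F n → Fml σ ar F 0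
  | 0, φ => φ
  | _ + 1, φ => Fml.exs (.fex φ)

section Sat

variable {F : Frag} {A : Type} (I : ∀ r : σ, (Fin (ar r) → A) → Prop)

theorem sat_exs : ∀ {n : ℕ} (φ : Fml σ ar F n),
    Sat I φ.exs Fin.elim0 ↔ ∃ val : Fin n → A, Sat I φ val
  | 0, φ => ⟨fun h => ⟨_, h⟩, fun ⟨val, h⟩ => Subsingleton.elim val Fin.elim0 ▸ h⟩
  | n + 1, φ => by
    rw [Fml.exs, sat_exs]
    exact ⟨fun ⟨val, a, h⟩ => ⟨_, h⟩,
      fun ⟨val, h⟩ => ⟨Fin.init val, val (Fin.last n), (Fin.snoc_init_self val).symm ▸ h⟩⟩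

theorem sat_foldr_fand {n : ℕ} (φ : Fml σ ar F n) (L : List (Fml σ ar F n))
    (val : Fin n → A) :
    Sat I (L.foldr .fand φ) val ↔ (∀ ψ ∈ L, Sat I ψ val) ∧ Sat I φ val := by
  induction L with
  | nil => simp
  | cons ψ L ih => simp only [List.foldr_cons, Sat, ih, List.forall_mem_cons, and_assoc]

end Sat

theorem sat_comp_of_isHom {F : Frag} (hF : F.IsExistentialPositive) {A B : Type}
    {IA : ∀ r : σ, (Fin (ar r) → A) → Prop} {IB : ∀ r : σ, (Fin (ar r) → B) → Prop}
    {h : A → B} (hh : IsHom IA IB h) :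
    ∀ {n : ℕ} (φ : Fml σ ar F n) (val : Fin n → A), Sat IA φ val → Sat IB φ (h ∘ val)
  | _, .rel r v, val, hs => hh r (val ∘ v) hs
  | _, .equal _ i j, val, hs => congrArg h hs
  | _, .nequal hne _ _, _, _ => absurd hne (by simp [hF.1])
  | _, .fnot hneg _, _, _ => absurd hneg (by simp [hF.2.1])
  | _, .fand φ ψ, val, hs =>
    ⟨sat_comp_of_isHom hF hh φ val hs.1, sat_comp_of_isHom hF hh ψ val hs.2⟩
  | _, .forr _ φ ψ, val, hs =>
    hs.imp (sat_comp_of_isHom hF hh φ val) (sat_comp_of_isHom hF hh ψ val)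
  | _, .fex φ, val, hs => by
    obtain ⟨a, hs⟩ := hs
    exact ⟨h a, Fin.comp_snoc h val a ▸ sat_comp_of_isHom hF hh φ (Fin.snoc val a) hs⟩
  | _, .fall hall _, _, _ => absurd hall (by simp [hF.2.2])

theorem sat_sentence_of_isHom {F : Frag} (hF : F.IsExistentialPositive) {A B : Type}
    {IA : ∀ r : σ, (Fin (ar r) → A) → Prop} {IB : ∀ r : σ, (Fin (ar r) → B) → Prop}
    {h : A → B} (hh : IsHom IA IB h) {φ : Fml σ ar F 0} (hφ : Sat IA φ Fin.elim0) :
    Sat IB φ Fin.elim0 :=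
  Subsingleton.elim (h ∘ Fin.elim0) Fin.elim0 ▸ sat_comp_of_isHom hF hh φ _ hφ

section CanonicalQuery

variable {F : Frag} {A : Type} {n : ℕ} (e : A ≃ Fin n)

/-- The elements of `A` serve as the variables, numbered by `e`. -/
def atomOf (t : Σ r : σ, Fin (ar r) → A) : Fml σ ar F n :=
  .rel t.1 (e ∘ t.2)

/-- The extra conjunct `t₀` keeps the conjunction nonempty, as the fragments have no `⊤`. -/
def diagram (t₀ : Σ r : σ, Fin (ar r) → A) (L : List (Σ r : σ, Fin (ar r) → A)) :
    Fml σ ar F n :=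
  (L.map (atomOf e)).foldr .fand (atomOf e t₀)

def canonicalQuery (t₀ : Σ r : σ, Fin (ar r) → A) (L : List (Σ r : σ, Fin (ar r) → A)) :
    Fml σ ar F 0 :=
  (diagram e t₀ L).exs

variable {IA : ∀ r : σ, (Fin (ar r) → A) → Prop} {t₀ : Σ r : σ, Fin (ar r) → A}
  {L : List (Σ r : σ, Fin (ar r) → A)} {X : Type} (I : ∀ r : σ, (Fin (ar r) → X) → Prop)

theorem sat_diagram (ht₀ : IA t₀.1 t₀.2) (hL : ∀ t, t ∈ L ↔ IA t.1 t.2) (val : Fin n → X) :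
    Sat I (diagram (F := F) e t₀ L) val ↔ IsHom IA I (val ∘ e) := by
  simp only [diagram, sat_foldr_fand, List.forall_mem_map, hL]
  exact ⟨fun h r t ht => h.1 ⟨r, t⟩ ht, fun h => ⟨fun t ht => h t.1 t.2 ht, h _ _ ht₀⟩⟩

theorem sat_canonicalQuery (ht₀ : IA t₀.1 t₀.2) (hL : ∀ t, t ∈ L ↔ IA t.1 t.2) :
    Sat I (canonicalQuery (F := F) e t₀ L) Fin.elim0 ↔ ∃ h : A → X, IsHom IA I h := by
  simp only [canonicalQuery, sat_exs, sat_diagram e I ht₀ hL]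
  exact ⟨fun ⟨val, h⟩ => ⟨_, h⟩, fun ⟨h, hh⟩ => ⟨h ∘ e.symm, by simpa [Function.comp_assoc]⟩⟩

end CanonicalQuery

theorem exists_isHom_of_sat_imp [Finite σ] {F : Frag} {A B : Type} [Finite A] [Nonempty B]
    {IA : ∀ r : σ, (Fin (ar r) → A) → Prop} {IB : ∀ r : σ, (Fin (ar r) → B) → Prop}
    (hAB : ∀ φ : Fml σ ar F 0, Sat IA φ Fin.elim0 → Sat IB φ Fin.elim0) :
    ∃ h : A → B, IsHom IA IB h := by
  by_cases hfact : ∃ t : Σ r : σ, Fin (ar r) → A, IA t.1 t.2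
  · obtain ⟨t₀, ht₀⟩ := hfact
    obtain ⟨n, ⟨e⟩⟩ := Finite.exists_equiv_fin A
    let facts := (Set.toFinite {t : Σ r : σ, Fin (ar r) → A | IA t.1 t.2}).toFinset.toList
    have hfacts : ∀ t, t ∈ facts ↔ IA t.1 t.2 := by simp [facts]
    have hA : Sat IA (canonicalQuery (F := F) e t₀ facts) Fin.elim0 :=
      (sat_canonicalQuery e IA ht₀ hfacts).2 ⟨id, fun _ _ ht => ht⟩
    exact (sat_canonicalQuery e IB ht₀ hfacts).1 (hAB _ hA)
  · rw [not_exists] at hfact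
    exact ⟨fun _ => Classical.arbitrary B, fun r t ht => absurd ht (hfact ⟨r, t⟩)⟩

theorem homEquiv_iff_sat_iff [Finite σ] {F : Frag} (hF : F.IsExistentialPositive)
    {A B : Type} [Finite A] [Finite B] [Nonempty A] [Nonempty B]
    (IA : ∀ r : σ, (Fin (ar r) → A) → Prop) (IB : ∀ r : σ, (Fin (ar r) → B) → Prop) :
    ((∃ h : A → B, IsHom IA IB h) ∧ (∃ h : B → A, IsHom IB IA h)) ↔
      ∀ φ : Fml σ ar F 0, Sat IA φ Fin.elim0 ↔ Sat IB φ Fin.elim0 :=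
  ⟨fun ⟨⟨_, hf⟩, ⟨_, hg⟩⟩ _ => ⟨sat_sentence_of_isHom hF hf, sat_sentence_of_isHom hF hg⟩,
    fun hsat => ⟨exists_isHom_of_sat_imp fun φ => (hsat φ).1,
      exists_isHom_of_sat_imp fun φ => (hsat φ).2⟩⟩

end

/-- Homomorphic equivalence of 𝒜 and ℬ is equivalent to agreement on all
sentences of each of the fragments {∃,∧}, {∃,∧,=}, {∃,∧,∨} and {∃,∧,∨,=}. -/
theorem homEquiv_iff_sentence_equivalences {σ : Type} [Finite σ] (ar : σ → ℕ)
    {A B : Type} [Finite A] [Finite B] [Nonempty A] [Nonempty B]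
    (IA : ∀ r : σ, (Fin (ar r) → A) → Prop)
    (IB : ∀ r : σ, (Fin (ar r) → B) → Prop) :
    (((∃ h : A → B, IsHom IA IB h) ∧ (∃ h : B → A, IsHom IB IA h)) ↔
        ∀ φ : Fml σ ar ppFrag 0, Sat IA φ Fin.elim0 ↔ Sat IB φ Fin.elim0) ∧
    (((∃ h : A → B, IsHom IA IB h) ∧ (∃ h : B → A, IsHom IB IA h)) ↔
        ∀ φ : Fml σ ar ppEqFrag 0, Sat IA φ Fin.elim0 ↔ Sat IB φ Fin.elim0) ∧
    (((∃ h : A → B, IsHom IA IB h) ∧ (∃ h : B → A, IsHom IB IA h)) ↔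
        ∀ φ : Fml σ ar ppOrFrag 0, Sat IA φ Fin.elim0 ↔ Sat IB φ Fin.elim0) ∧
    (((∃ h : A → B, IsHom IA IB h) ∧ (∃ h : B → A, IsHom IB IA h)) ↔
        ∀ φ : Fml σ ar ppOrEqFrag 0, Sat IA φ Fin.elim0 ↔ Sat IB φ Fin.elim0) :=
  ⟨homEquiv_iff_sat_iff ⟨rfl, rfl, rfl⟩ IA IB, homEquiv_iff_sat_iff ⟨rfl, rfl, rfl⟩ IA IB,
    homEquiv_iff_sat_iff ⟨rfl, rfl, rfl⟩ IA IB, homEquiv_iff_sat_iff ⟨rfl, rfl, rfl⟩ IA IB⟩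

end MC
end

section
/- Let 𝒜 and ℬ be two finite σ-structures. The following are equivalent: (i) every {∃,∀,∧,∨,¬}-FO sentence true in 𝒜 is true in ℬ; (ii) there exists a full surjective hyper-morphism from 𝒜 to ℬ; (iii) 𝒜 and ℬ satisfy exactly the same {∃,∀,∧,∨,¬}-FO sentences. -/
namespace MC

/-- `f : A → Set B` is a hyper-morphism from `(A, IA)` to `(B, IB)`:
it is total (nonempty images) and preserves all relations. -/
def IsHyperMorphism {σ : Type} {ar : σ → ℕ} {A B : Type}
    (IA : ∀ r : σ, (Fin (ar r) → A) → Prop)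
    (IB : ∀ r : σ, (Fin (ar r) → B) → Prop) (f : A → Set B) : Prop :=
  (∀ a : A, (f a).Nonempty) ∧
  ∀ (r : σ) (t : Fin (ar r) → A), IA r t →
    ∀ s : Fin (ar r) → B, (∀ i, s i ∈ f (t i)) → IB r s

/-- A hyper-operation `f : A → Set B` is surjective if every element of `B`
lies in the image of some element of `A`. -/
def HyperSurjective {A B : Type} (f : A → Set B) : Prop :=
  ∀ b : B, ∃ a : A, b ∈ f a

/-- A hyper-morphism is full if membership of images exactly reflects the relations. -/
def IsFull {σ : Type} {ar : σ → ℕ} {A B : Type}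
    (IA : ∀ r : σ, (Fin (ar r) → A) → Prop)
    (IB : ∀ r : σ, (Fin (ar r) → B) → Prop) (f : A → Set B) : Prop :=
  ∀ (r : σ) (t : Fin (ar r) → A) (s : Fin (ar r) → B),
    (∀ i, s i ∈ f (t i)) → (IA r t ↔ IB r s)

end MC

namespace MC

/-- The fragment {∃,∀,∧,∨,¬}-FO: equality-free first-order logic. -/
def eqFreeFrag : Frag := ⟨false, false, true, true, true⟩

section

variable {σ : Type} {ar : σ → ℕ}

lemma exists_sat_iff_forall_mem {F : Frag} {n : ℕ} :
    ∀ l : List (Fml σ ar F n), l ≠ [] → ∃ ψ : Fml σ ar F n,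
      ∀ {C : Type} (I : ∀ r : σ, (Fin (ar r) → C) → Prop) (val : Fin n → C),
        Sat I ψ val ↔ ∀ φ ∈ l, Sat I φ val
  | [], hl => absurd rfl hl
  | [φ], _ => ⟨φ, by simp⟩
  | φ :: φ' :: l, _ => by
    obtain ⟨ψ, hψ⟩ := exists_sat_iff_forall_mem (φ' :: l) (List.cons_ne_nil _ _)
    exact ⟨.fand φ ψ, fun I val => by simp only [Sat, hψ, List.forall_mem_cons]⟩

lemma exists_sat_iff_forall {F : Frag} {n : ℕ} {ι : Type} [Finite ι] [Nonempty ι]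
    (φ : ι → Fml σ ar F n) : ∃ ψ : Fml σ ar F n,
      ∀ {C : Type} (I : ∀ r : σ, (Fin (ar r) → C) → Prop) (val : Fin n → C),
        Sat I ψ val ↔ ∀ i, Sat I (φ i) val := by
  have := Fintype.ofFinite ι
  obtain ⟨ψ, hψ⟩ := exists_sat_iff_forall_mem ((Finset.univ : Finset ι).toList.map φ)
    (by simp [Finset.univ_nonempty.ne_empty])
  exact ⟨ψ, fun I val => by simp [hψ]⟩

variable {A B : Type}

lemma forall_snoc_mem {f : A → Set B} {n : ℕ} {va : Fin n → A} {vb : Fin n → B}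
    (h : ∀ i, vb i ∈ f (va i)) {a : A} {b : B} (hab : b ∈ f a) :
    ∀ i, (Fin.snoc vb b : Fin (n + 1) → B) i ∈ f ((Fin.snoc va a : Fin (n + 1) → A) i) :=
  Fin.lastCases (by simpa using hab) (fun j => by simpa using h j)

variable {IA : ∀ r : σ, (Fin (ar r) → A) → Prop} {IB : ∀ r : σ, (Fin (ar r) → B) → Prop}

lemma sat_iff_of_forall_mem {f : A → Set B} (hne : ∀ a, (f a).Nonempty)
    (hsurj : HyperSurjective f) (hfull : IsFull IA IB f) {n : ℕ}
    (φ : Fml σ ar eqFreeFrag n) {va : Fin n → A} {vb : Fin n → B}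
    (h : ∀ i, vb i ∈ f (va i)) : Sat IA φ va ↔ Sat IB φ vb := by
  induction φ with
  | rel r v => exact hfull r _ _ fun i => h (v i)
  | equal hF => exact absurd hF Bool.false_ne_true
  | nequal hF => exact absurd hF Bool.false_ne_true
  | fnot _ φ ih => exact (ih h).not
  | fand φ ψ ihφ ihψ => exact and_congr (ihφ h) (ihψ h)
  | forr _ φ ψ ihφ ihψ => exact or_congr (ihφ h) (ihψ h)
  | fex φ ih =>
    constructor
    · rintro ⟨a, ha⟩
      obtain ⟨b, hb⟩ := hne a
      exact ⟨b, (ih (forall_snoc_mem h hb)).mp ha⟩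
    · rintro ⟨b, hb⟩
      obtain ⟨a, ha⟩ := hsurj b
      exact ⟨a, (ih (forall_snoc_mem h ha)).mpr hb⟩
  | fall _ φ ih =>
    constructor
    · intro hA b
      obtain ⟨a, ha⟩ := hsurj b
      exact (ih (forall_snoc_mem h ha)).mp (hA a)
    · intro hB a
      obtain ⟨b, hb⟩ := hne a
      exact (ih (forall_snoc_mem h hb)).mpr (hB b)

lemma IsFull.isHyperMorphism {f : A → Set B} (hfull : IsFull IA IB f)
    (hne : ∀ a, (f a).Nonempty) : IsHyperMorphism IA IB f :=
  ⟨hne, fun r t ht s hs => (hfull r t s hs).mp ht⟩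

variable (IA IB) in
def TypeIncl {n : ℕ} (va : Fin n → A) (vb : Fin n → B) : Prop :=
  ∀ φ : Fml σ ar eqFreeFrag n, Sat IA φ va → Sat IB φ vb

namespace TypeIncl

variable {n : ℕ} {va : Fin n → A} {vb : Fin n → B}

lemma sat_iff (h : TypeIncl IA IB va vb) (φ : Fml σ ar eqFreeFrag n) :
    Sat IA φ va ↔ Sat IB φ vb :=
  ⟨h φ, fun hB => by_contra fun hA => h (.fnot rfl φ) hA hB⟩

lemma symm (h : TypeIncl IA IB va vb) : TypeIncl IB IA vb va :=
  fun φ => (h.sat_iff φ).mpr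

lemma forth [Finite B] [Nonempty B] (h : TypeIncl IA IB va vb) (a : A) :
    ∃ b, TypeIncl IA IB (Fin.snoc va a) (Fin.snoc vb b) := by
  by_contra! hfail
  simp only [TypeIncl, not_forall, exists_prop] at hfail
  choose φ hφA hφB using hfail
  obtain ⟨ψ, hψ⟩ := exists_sat_iff_forall φ
  obtain ⟨b, hb⟩ := h (.fex ψ) ⟨a, (hψ IA _).mpr hφA⟩
  exact hφB b ((hψ IB _).mp hb b)

lemma back [Finite A] [Nonempty A] (h : TypeIncl IA IB va vb) (b : B) :
    ∃ a, TypeIncl IA IB (Fin.snoc va a) (Fin.snoc vb b) :=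
  (h.symm.forth b).imp fun _ ha => ha.symm

lemma exists_append [Finite B] [Nonempty B] (h : TypeIncl IA IB va vb) :
    ∀ {m : ℕ} (e : Fin m → A), ∃ u : Fin m → B, TypeIncl IA IB (Fin.append va e) (Fin.append vb u)
  | 0, e => ⟨Fin.elim0, by simpa [Fin.append_elim0, Subsingleton.elim e Fin.elim0] using h⟩
  | m + 1, e => by
    obtain ⟨u, hu⟩ := h.exists_append (Fin.init e)
    obtain ⟨b, hb⟩ := hu.forth (e (Fin.last m))
    refine ⟨Fin.snoc u b, ?_⟩
    rwa [← Fin.append_snoc, ← Fin.append_snoc, Fin.snoc_init_self] at hb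

lemma isFull_image_preimage {k : ℕ} {u : Fin k → A} {v : Fin k → B}
    (h : TypeIncl IA IB u v) : IsFull IA IB fun a => v '' (u ⁻¹' {a}) := by
  intro r t s hs
  choose p hpu hpv using hs
  have hu : (fun i => u (p i)) = t := funext hpu
  have hv : (fun i => v (p i)) = s := funext hpv
  simpa only [Sat, hu, hv] using h.sat_iff (.rel r p)

end TypeIncl

lemma exists_fin_surjective (α : Type) [Finite α] : ∃ (k : ℕ) (e : Fin k → α), e.Surjective :=
  let ⟨k, ⟨e⟩⟩ := Finite.exists_equiv_fin α
  ⟨k, e.symm, e.symm.surjective⟩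

lemma exists_surjective_typeIncl [Finite A] [Finite B] [Nonempty A] [Nonempty B]
    (h : TypeIncl IA IB (Fin.elim0 : Fin 0 → A) Fin.elim0) :
    ∃ (k : ℕ) (u : Fin k → A) (v : Fin k → B), u.Surjective ∧ v.Surjective ∧ TypeIncl IA IB u v := by
  obtain ⟨p, eA, heA⟩ := exists_fin_surjective A
  obtain ⟨q, eB, heB⟩ := exists_fin_surjective B
  obtain ⟨w₁, h₁⟩ := h.exists_append eA
  obtain ⟨w₂, h₂⟩ := h₁.symm.exists_append eB
  refine ⟨_, _, _, fun a => ?_, fun b => ?_, h₂.symm⟩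
  · obtain ⟨i, rfl⟩ := heA a
    exact ⟨Fin.castAdd q (Fin.natAdd 0 i), by simp⟩
  · obtain ⟨i, rfl⟩ := heB b
    exact ⟨Fin.natAdd _ i, by simp⟩

lemma exists_full_surjective_hyper [Finite A] [Finite B] [Nonempty A] [Nonempty B]
    (h : ∀ φ : Fml σ ar eqFreeFrag 0, Sat IA φ Fin.elim0 → Sat IB φ Fin.elim0) :
    ∃ f : A → Set B, IsHyperMorphism IA IB f ∧ HyperSurjective f ∧ IsFull IA IB f := by
  obtain ⟨k, u, v, hu, hv, huv⟩ := exists_surjective_typeIncl h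
  have hne (a : A) : (v '' (u ⁻¹' {a})).Nonempty :=
    let ⟨i, hi⟩ := hu a
    ⟨v i, i, hi, rfl⟩
  refine ⟨_, huv.isFull_image_preimage.isHyperMorphism hne, fun b => ?_, huv.isFull_image_preimage⟩
  obtain ⟨i, rfl⟩ := hv b
  exact ⟨u i, i, rfl, rfl⟩

end

theorem eqFree_containment_iff_full_surjective_hyper_general {σ : Type} (ar : σ → ℕ)
    {A B : Type} [Finite A] [Finite B] [Nonempty A] [Nonempty B]
    (IA : ∀ r : σ, (Fin (ar r) → A) → Prop)
    (IB : ∀ r : σ, (Fin (ar r) → B) → Prop) :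
    ((∀ φ : Fml σ ar eqFreeFrag 0, Sat IA φ Fin.elim0 → Sat IB φ Fin.elim0) ↔
      ∃ f : A → Set B, IsHyperMorphism IA IB f ∧ HyperSurjective f ∧ IsFull IA IB f) ∧
    ((∀ φ : Fml σ ar eqFreeFrag 0, Sat IA φ Fin.elim0 → Sat IB φ Fin.elim0) ↔
      ∀ φ : Fml σ ar eqFreeFrag 0, Sat IA φ Fin.elim0 ↔ Sat IB φ Fin.elim0) := by
  have equiv_of_hyper : (∃ f : A → Set B, IsHyperMorphism IA IB f ∧ HyperSurjective f ∧
      IsFull IA IB f) → ∀ φ : Fml σ ar eqFreeFrag 0, Sat IA φ Fin.elim0 ↔ Sat IB φ Fin.elim0 :=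
    fun ⟨_, hm, hs, hf⟩ φ => sat_iff_of_forall_mem hm.1 hs hf φ finZeroElim
  exact ⟨⟨exists_full_surjective_hyper, fun hf φ => (equiv_of_hyper hf φ).mp⟩,
    ⟨fun h => equiv_of_hyper (exists_full_surjective_hyper h), fun h φ => (h φ).mp⟩⟩

/-- For equality-free FO: containment is characterised by the existence of a
full surjective hyper-morphism, and coincides with equivalence. -/
theorem eqFree_containment_iff_full_surjective_hyper {σ : Type} [Finite σ] (ar : σ → ℕ)
    {A B : Type} [Finite A] [Finite B] [Nonempty A] [Nonempty B]
    (IA : ∀ r : σ, (Fin (ar r) → A) → Prop)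
    (IB : ∀ r : σ, (Fin (ar r) → B) → Prop) :
    ((∀ φ : Fml σ ar eqFreeFrag 0, Sat IA φ Fin.elim0 → Sat IB φ Fin.elim0) ↔
      ∃ f : A → Set B, IsHyperMorphism IA IB f ∧ HyperSurjective f ∧ IsFull IA IB f) ∧
    ((∀ φ : Fml σ ar eqFreeFrag 0, Sat IA φ Fin.elim0 → Sat IB φ Fin.elim0) ↔
      ∀ φ : Fml σ ar eqFreeFrag 0, Sat IA φ Fin.elim0 ↔ Sat IB φ Fin.elim0) :=
  eqFree_containment_iff_full_surjective_hyper_general ar IA IB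

end MC
end

section
/- Let 𝒜 be a finite σ-structure with domain A and let U, X ⊆ A. Then 𝒜 has ∀U-∃X-relativisation if and only if the complement structure 𝒜̄ has ∀X-∃U-relativisation. -/
namespace MC

/-- Satisfaction where universal quantifiers are relativised to `Uq` and
existential quantifiers are relativised to `Xq`. -/
def RelSat {σ : Type} {ar : σ → ℕ} {F : Frag} {A : Type}
    (I : ∀ r : σ, (Fin (ar r) → A) → Prop) (Uq Xq : Set A) :
    ∀ {n : ℕ}, Fml σ ar F n → (Fin n → A) → Prop
  | _, .rel r v, val => I r fun i => val (v i)
  | _, .equal _ i j, val => val i = val j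
  | _, .nequal _ i j, val => val i ≠ val j
  | _, .fnot _ φ, val => ¬ RelSat I Uq Xq φ val
  | _, .fand φ ψ, val => RelSat I Uq Xq φ val ∧ RelSat I Uq Xq ψ val
  | _, .forr _ φ ψ, val => RelSat I Uq Xq φ val ∨ RelSat I Uq Xq ψ val
  | _, .fex φ, val => ∃ a ∈ Xq, RelSat I Uq Xq φ (Fin.snoc val a)
  | _, .fall _ φ, val => ∀ a ∈ Uq, RelSat I Uq Xq φ (Fin.snoc val a)

/-- The fragment {∃,∀,∧,∨}-FO: positive equality-free logic. -/
def posFrag : Frag := ⟨false, false, false, true, true⟩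

/-- `(A, I)` has ∀U-∃X-relativisation: for every positive equality-free sentence,
plain truth, truth with ∀ relativised to `U`, truth with ∃ relativised to `X`, and
truth with both relativisations, are all equivalent. -/
def HasUXRelativisation {σ : Type} {ar : σ → ℕ} {A : Type}
    (I : ∀ r : σ, (Fin (ar r) → A) → Prop) (U X : Set A) : Prop :=
  ∀ φ : Fml σ ar posFrag 0,
    (RelSat I Set.univ Set.univ φ Fin.elim0 ↔ RelSat I U Set.univ φ Fin.elim0) ∧
    (RelSat I Set.univ Set.univ φ Fin.elim0 ↔ RelSat I Set.univ X φ Fin.elim0) ∧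
    (RelSat I Set.univ Set.univ φ Fin.elim0 ↔ RelSat I U X φ Fin.elim0)

/-- `f` is a surjective hyper-endomorphism of `(A, I)`: total, surjective and
preserving all relations. -/
def IsSHE {σ : Type} {ar : σ → ℕ} {A : Type}
    (I : ∀ r : σ, (Fin (ar r) → A) → Prop) (f : A → Set A) : Prop :=
  (∀ a : A, (f a).Nonempty) ∧ (∀ b : A, ∃ a : A, b ∈ f a) ∧
  ∀ (r : σ) (t : Fin (ar r) → A), I r t →
    ∀ s : Fin (ar r) → A, (∀ i, s i ∈ f (t i)) → I r s

/-- `f` is `U`-surjective: every element is in the image of some element of `U`. -/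
def USurjective {A : Type} (f : A → Set A) (U : Set A) : Prop :=
  ∀ b : A, ∃ u ∈ U, b ∈ f u

/-- `f` is `X`-total: the image of every element meets `X`. -/
def XTotal {A : Type} (f : A → Set A) (X : Set A) : Prop :=
  ∀ a : A, ∃ x ∈ X, x ∈ f a

end MC

namespace MC

/-- The De Morgan dual of a positive equality-free formula. -/
def Fml.dual {σ : Type} {ar : σ → ℕ} : ∀ {n : ℕ},
    Fml σ ar posFrag n → Fml σ ar posFrag n
  | _, .rel r v => .rel r v
  | _, .equal h _ _ => nomatch h
  | _, .nequal h _ _ => nomatch h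
  | _, .fnot h _ => nomatch h
  | _, .fand φ ψ => .forr rfl φ.dual ψ.dual
  | _, .forr _ φ ψ => .fand φ.dual ψ.dual
  | _, .fex φ => .fall rfl φ.dual
  | _, .fall _ φ => .fex φ.dual

theorem Fml.dual_dual {σ : Type} {ar : σ → ℕ} : ∀ {n : ℕ}
    (φ : Fml σ ar posFrag n), φ.dual.dual = φ
  | _, .rel r v => rfl
  | _, .equal h _ _ => nomatch h
  | _, .nequal h _ _ => nomatch h
  | _, .fnot h _ => nomatch h
  | _, .fand φ ψ => by simp [Fml.dual, dual_dual φ, dual_dual ψ]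
  | _, .forr _ φ ψ => by simp [Fml.dual, dual_dual φ, dual_dual ψ]
  | _, .fex φ => by simp [Fml.dual, dual_dual φ]
  | _, .fall _ φ => by simp [Fml.dual, dual_dual φ]

theorem relSat_dual {σ : Type} {ar : σ → ℕ} {A : Type}
    (I : ∀ r : σ, (Fin (ar r) → A) → Prop) (Uq Xq : Set A) :
    ∀ {n : ℕ} (φ : Fml σ ar posFrag n) (val : Fin n → A),
      RelSat (fun r t => ¬ I r t) Uq Xq φ.dual val ↔ ¬ RelSat I Xq Uq φ val
  | _, .rel r v, val => Iff.rfl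
  | _, .equal h _ _, _ => nomatch h
  | _, .nequal h _ _, _ => nomatch h
  | _, .fnot h _, _ => nomatch h
  | _, .fand φ ψ, val => by
      simp only [Fml.dual, RelSat, relSat_dual I Uq Xq φ, relSat_dual I Uq Xq ψ]
      tauto
  | _, .forr _ φ ψ, val => by
      simp only [Fml.dual, RelSat, relSat_dual I Uq Xq φ, relSat_dual I Uq Xq ψ]
      tauto
  | _, .fex φ, val => by
      simp only [Fml.dual, RelSat]
      push_neg
      exact forall₂_congr fun a _ => relSat_dual I Uq Xq φ _
  | _, .fall _ φ, val => by
      simp only [Fml.dual, RelSat]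
      push_neg
      exact exists_congr fun a => and_congr_right fun _ => relSat_dual I Uq Xq φ _

theorem relSat_congr {σ : Type} {ar : σ → ℕ} {A : Type}
    {I J : ∀ r : σ, (Fin (ar r) → A) → Prop}
    (hIJ : ∀ r t, I r t ↔ J r t) {F : Frag} (Uq Xq : Set A) :
    ∀ {n : ℕ} (φ : Fml σ ar F n) (val : Fin n → A),
      RelSat I Uq Xq φ val ↔ RelSat J Uq Xq φ val
  | _, .rel r v, val => hIJ r _
  | _, .equal _ _ _, _ => Iff.rfl
  | _, .nequal _ _ _, _ => Iff.rfl
  | _, .fnot _ φ, val => not_congr (relSat_congr hIJ Uq Xq φ val)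
  | _, .fand φ ψ, val =>
      and_congr (relSat_congr hIJ Uq Xq φ val) (relSat_congr hIJ Uq Xq ψ val)
  | _, .forr _ φ ψ, val =>
      or_congr (relSat_congr hIJ Uq Xq φ val) (relSat_congr hIJ Uq Xq ψ val)
  | _, .fex φ, val =>
      exists_congr fun a => and_congr_right fun _ => relSat_congr hIJ Uq Xq φ _
  | _, .fall _ φ, val =>
      forall₂_congr fun a _ => relSat_congr hIJ Uq Xq φ _

theorem hasUX_compl {σ : Type} {ar : σ → ℕ} {A : Type}
    (I : ∀ r : σ, (Fin (ar r) → A) → Prop) (U X : Set A)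
    (h : HasUXRelativisation (ar := ar) I U X) :
    HasUXRelativisation (ar := ar) (fun r t => ¬ I r t) X U := by
  intro φ
  obtain ⟨h1, h2, h3⟩ := h φ.dual
  have key : ∀ (S T : Set A),
      RelSat (fun r t => ¬ I r t) S T φ Fin.elim0 ↔
        ¬ RelSat I T S φ.dual Fin.elim0 := by
    intro S T
    conv_lhs => rw [show φ = φ.dual.dual from (Fml.dual_dual φ).symm]
    exact relSat_dual I S T φ.dual Fin.elim0
  refine ⟨?_, ?_, ?_⟩
  · exact (key Set.univ Set.univ).trans
      ((not_congr h2).trans (key X Set.univ).symm)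
  · exact (key Set.univ Set.univ).trans
      ((not_congr h1).trans (key Set.univ U).symm)
  · exact (key Set.univ Set.univ).trans
      ((not_congr h3).trans (key X U).symm)

/-- Duality: 𝒜 has ∀U-∃X-relativisation iff its complement structure has
∀X-∃U-relativisation. -/
theorem relativisation_duality {σ : Type} [Finite σ] (ar : σ → ℕ)
    {A : Type} [Finite A] [Nonempty A]
    (I : ∀ r : σ, (Fin (ar r) → A) → Prop) (U X : Set A) :
    HasUXRelativisation (ar := ar) I U X ↔
      HasUXRelativisation (ar := ar) (fun r t => ¬ I r t) X U := by
  constructor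
  · exact hasUX_compl I U X
  · intro h
    have h2 := hasUX_compl (fun r t => ¬ I r t) X U h
    intro φ
    have hcongr := relSat_congr
      (I := fun r t => ¬ ¬ I r t) (J := I) (fun r t => not_not) (F := posFrag)
    obtain ⟨h1', h2', h3'⟩ := h2 φ
    exact ⟨((hcongr Set.univ Set.univ φ Fin.elim0).symm.trans h1').trans
        (hcongr U Set.univ φ Fin.elim0),
      ((hcongr Set.univ Set.univ φ Fin.elim0).symm.trans h2').trans
        (hcongr Set.univ X φ Fin.elim0),
      ((hcongr Set.univ Set.univ φ Fin.elim0).symm.trans h3').trans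
        (hcongr U X φ Fin.elim0)⟩

end MC
end

section
/- Let 𝒜 be a finite σ-structure that has a U-surjective X-total surjective hyper-endomorphism, and let 𝒜̃ be the substructure of 𝒜 induced by U ∪ X. Then: (i) 𝒜 and 𝒜̃ satisfy exactly the same {∃,∀,∧,∨}-FO sentences; (ii) 𝒜̃ has ∀U-∃X-relativisation. -/
namespace MC

lemma snoc_mem_aux {A : Type} {f : A → Set A} {n : ℕ} {val val' : Fin n → A}
    (hv : ∀ i, val' i ∈ f (val i)) {a b : A} (hab : b ∈ f a) :
    ∀ i, (Fin.snoc val' b : Fin (n + 1) → A) i ∈ f ((Fin.snoc val a : Fin (n + 1) → A) i) := by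
  intro i
  induction i using Fin.lastCases with
  | last => simpa using hab
  | cast j => simpa using hv j

/-- Key preservation lemma: positive equality-free truth transfers along a
hyper-endomorphism between relativisations. -/
lemma relSat_transfer {σ : Type} {ar : σ → ℕ} {A : Type}
    (I : ∀ r : σ, (Fin (ar r) → A) → Prop) (f : A → Set A)
    (hrel : ∀ (r : σ) (t : Fin (ar r) → A), I r t →
      ∀ s : Fin (ar r) → A, (∀ i, s i ∈ f (t i)) → I r s)
    (Q1 Q2 Q1' Q2' : Set A)
    (h1 : ∀ b ∈ Q1', ∃ a ∈ Q1, b ∈ f a)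
    (h2 : ∀ a ∈ Q2, ∃ b ∈ Q2', b ∈ f a) :
    ∀ {n : ℕ} (φ : Fml σ ar posFrag n) (val val' : Fin n → A),
      (∀ i, val' i ∈ f (val i)) →
      RelSat I Q1 Q2 φ val → RelSat I Q1' Q2' φ val' := by
  intro n φ
  induction φ with
  | rel r v =>
    intro val val' hv h
    exact hrel r _ h _ (fun i => hv (v i))
  | equal h i j => simp [posFrag] at h
  | nequal h i j => simp [posFrag] at h
  | fnot h φ ih => simp [posFrag] at h
  | fand φ ψ ih1 ih2 =>
    intro val val' hv h
    exact ⟨ih1 _ _ hv h.1, ih2 _ _ hv h.2⟩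
  | forr h φ ψ ih1 ih2 =>
    intro val val' hv hor
    exact hor.imp (ih1 _ _ hv) (ih2 _ _ hv)
  | fex φ ih =>
    rintro val val' hv ⟨a, ha, hsat⟩
    obtain ⟨b, hb, hbf⟩ := h2 a ha
    exact ⟨b, hb, ih _ _ (snoc_mem_aux hv hbf) hsat⟩
  | fall h φ ih =>
    intro val val' hv hs b hb
    obtain ⟨a, ha, hbf⟩ := h1 b hb
    exact ih _ _ (snoc_mem_aux hv hbf) (hs a ha)

lemma sat_iff_relSat_univ {σ : Type} {ar : σ → ℕ} {F : Frag} {A : Type}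
    (I : ∀ r : σ, (Fin (ar r) → A) → Prop) :
    ∀ {n : ℕ} (φ : Fml σ ar F n) (val : Fin n → A),
      Sat I φ val ↔ RelSat I Set.univ Set.univ φ val := by
  intro n φ
  induction φ with
  | rel r v => intro val; simp [Sat, RelSat]
  | equal h i j => intro val; simp [Sat, RelSat]
  | nequal h i j => intro val; simp [Sat, RelSat]
  | fnot h φ ih => intro val; simp [Sat, RelSat, ih]
  | fand φ ψ ih1 ih2 => intro val; simp [Sat, RelSat, ih1, ih2]
  | forr h φ ψ ih1 ih2 => intro val; simp [Sat, RelSat, ih1, ih2]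
  | fex φ ih => intro val; simp [Sat, RelSat, ih]
  | fall h φ ih => intro val; simp [Sat, RelSat, ih]

/-- Satisfaction in an induced substructure equals satisfaction in the original
structure with quantifiers relativised to the corresponding images. -/
lemma relSat_subtype {σ : Type} {ar : σ → ℕ} {F : Frag} {A : Type}
    (I : ∀ r : σ, (Fin (ar r) → A) → Prop) (B : Set A) (Uq Xq : Set ↥B) :
    ∀ {n : ℕ} (φ : Fml σ ar F n) (val : Fin n → ↥B),
      RelSat (A := ↥B) (fun r t => I r fun i => (t i : A)) Uq Xq φ val ↔
      RelSat I ((↑) '' Uq) ((↑) '' Xq) φ (fun i => (val i : A)) := by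
  have hsnoc : ∀ {n : ℕ} (val : Fin n → ↥B) (a : ↥B),
      (fun i => ((Fin.snoc val a : Fin (n + 1) → ↥B) i : A)) =
        Fin.snoc (fun i => (val i : A)) (a : A) := by
    intro n val a
    funext i
    induction i using Fin.lastCases with
    | last => simp
    | cast j => simp
  intro n φ
  induction φ with
  | rel r v => intro val; simp [RelSat]
  | equal h i j => intro val; simp [RelSat, Subtype.ext_iff]
  | nequal h i j => intro val; simp [RelSat, Subtype.ext_iff]
  | fnot h φ ih => intro val; simp [RelSat, ih]
  | fand φ ψ ih1 ih2 => intro val; simp [RelSat, ih1, ih2]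
  | forr h φ ψ ih1 ih2 => intro val; simp [RelSat, ih1, ih2]
  | fex φ ih =>
    intro val
    simp only [RelSat]
    constructor
    · rintro ⟨a, ha, hsat⟩
      refine ⟨(a : A), ⟨a, ha, rfl⟩, ?_⟩
      have := (ih (Fin.snoc val a)).mp hsat
      rwa [hsnoc] at this
    · rintro ⟨b, ⟨a, ha, rfl⟩, hsat⟩
      refine ⟨a, ha, (ih (Fin.snoc val a)).mpr ?_⟩
      rwa [hsnoc]
  | fall h φ ih =>
    intro val
    simp only [RelSat]
    constructor
    · rintro hs b ⟨a, ha, rfl⟩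
      have := (ih (Fin.snoc val a)).mp (hs a ha)
      rwa [hsnoc] at this
    · intro hs a ha
      refine (ih (Fin.snoc val a)).mpr ?_
      rw [hsnoc]
      exact hs (a : A) ⟨a, ha, rfl⟩

/-- If 𝒜 has a `U`-surjective `X`-total surjective hyper-endomorphism, then
(i) 𝒜 and the substructure 𝒜̃ induced by `U ∪ X` satisfy the same
{∃,∀,∧,∨}-FO sentences, and (ii) 𝒜̃ has ∀U-∃X-relativisation. -/
theorem UXshe_substructure {σ : Type} [Finite σ] (ar : σ → ℕ)
    {A : Type} [Finite A] [Nonempty A]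
    (I : ∀ r : σ, (Fin (ar r) → A) → Prop) (U X : Set A)
    (f : A → Set A) (hf : IsSHE I f) (hU : USurjective f U) (hX : XTotal f X) :
    (∀ φ : Fml σ ar posFrag 0,
      Sat I φ Fin.elim0 ↔
        Sat (A := ↥(U ∪ X)) (fun r t => I r fun i => (t i : A)) φ Fin.elim0) ∧
    HasUXRelativisation (ar := ar) (A := ↥(U ∪ X))
      (fun r t => I r fun i => (t i : A))
      {a : ↥(U ∪ X) | (a : A) ∈ U} {a : ↥(U ∪ X) | (a : A) ∈ X} := by
  set B : Set A := U ∪ X with hB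
  -- any two relativisations whose ∀-set contains U and ∃-set contains X agree
  have key : ∀ (P1 P2 P1' P2' : Set A), U ⊆ P1 → X ⊆ P2' →
      ∀ φ : Fml σ ar posFrag 0,
        RelSat I P1 P2 φ Fin.elim0 → RelSat I P1' P2' φ Fin.elim0 := by
    intro P1 P2 P1' P2' hP1 hP2 φ
    refine relSat_transfer I f hf.2.2 P1 P2 P1' P2'
      (fun b _ => ?_) (fun a _ => ?_) φ Fin.elim0 Fin.elim0 (fun i => i.elim0)
    · obtain ⟨u, hu, hb⟩ := hU b; exact ⟨u, hP1 hu, hb⟩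
    · obtain ⟨x, hx, hxf⟩ := hX a; exact ⟨x, hP2 hx, hxf⟩
  have key2 : ∀ (P1 P2 P1' P2' : Set A), U ⊆ P1 → U ⊆ P1' → X ⊆ P2 → X ⊆ P2' →
      ∀ φ : Fml σ ar posFrag 0,
        (RelSat I P1 P2 φ Fin.elim0 ↔ RelSat I P1' P2' φ Fin.elim0) :=
    fun P1 P2 P1' P2' h1 h1' h2 h2' φ =>
      ⟨key P1 P2 P1' P2' h1 h2' φ, key P1' P2' P1 P2 h1' h2 φ⟩
  -- images of the relevant subsets of the subtype
  have hval : ∀ (val : Fin 0 → ↥B), (fun i => ((val i : A))) = Fin.elim0 :=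
    fun val => funext fun i => i.elim0
  have hUuniv : U ⊆ (↑) '' (Set.univ : Set ↥B) := by
    intro u hu; exact ⟨⟨u, Or.inl hu⟩, trivial, rfl⟩
  have hXuniv : X ⊆ (↑) '' (Set.univ : Set ↥B) := by
    intro x hx; exact ⟨⟨x, Or.inr hx⟩, trivial, rfl⟩
  have hUU : U ⊆ (↑) '' {a : ↥B | (a : A) ∈ U} := by
    intro u hu; exact ⟨⟨u, Or.inl hu⟩, hu, rfl⟩
  have hXX : X ⊆ (↑) '' {a : ↥B | (a : A) ∈ X} := by
    intro x hx; exact ⟨⟨x, Or.inr hx⟩, hx, rfl⟩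
  -- a reusable bridge: plain truth on the subtype vs relativised truth on A
  have bridge : ∀ (Uq Xq : Set ↥B) (φ : Fml σ ar posFrag 0),
      RelSat (A := ↥B) (fun r t => I r fun i => (t i : A)) Uq Xq φ Fin.elim0 ↔
      RelSat I ((↑) '' Uq) ((↑) '' Xq) φ Fin.elim0 := by
    intro Uq Xq φ
    have := relSat_subtype I B Uq Xq φ Fin.elim0
    rwa [hval Fin.elim0] at this
  constructor
  · -- (i)
    intro φ
    rw [sat_iff_relSat_univ, sat_iff_relSat_univ, bridge]
    exact key2 _ _ _ _ (Set.subset_univ U) hUuniv (Set.subset_univ X) hXuniv φ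
  · -- (ii)
    intro φ
    rw [bridge, bridge, bridge, bridge]
    refine ⟨?_, ?_, ?_⟩
    · exact key2 _ _ _ _ hUuniv hUU hXuniv hXuniv φ
    · exact key2 _ _ _ _ hUuniv hUuniv hXuniv hXX φ
    · exact key2 _ _ _ _ hUuniv hUU hXuniv hXX φ

end MC
end

section
/- Let D be a finite set, M a DSM on D, and U, X ⊆ D such that M contains a U-surjective shop and an X-total shop, |U| is minimal among cardinalities of subsets U' of D such that M contains a U'-surjective shop, |X| is minimal among cardinalities of subsets X' of D such that M contains an X'-total shop, and, subject to these minimality conditions, |U ∩ X| is maximal. Then for every shop f ∈ M and every element z ∈ D, f(z) contains at most one element of U, i.e. |f(z) ∩ U| ≤ 1. -/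
namespace MC

/-- A shop (surjective hyper-operation) on `D`: a total and surjective
hyper-operation `D → Set D`. -/
structure Shop (D : Type) where
  f : D → Set D
  total : ∀ a : D, (f a).Nonempty
  surj : ∀ b : D, ∃ a : D, b ∈ f a

variable {D : Type}

/-- Composition of shops: `(comp g f) x = g (f x)`. -/
def Shop.comp (g f : Shop D) : Shop D where
  f := fun x => {z | ∃ y ∈ f.f x, z ∈ g.f y}
  total := by
    intro a
    obtain ⟨y, hy⟩ := f.total a
    obtain ⟨z, hz⟩ := g.total y
    exact ⟨z, y, hy, hz⟩
  surj := by
    intro b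
    obtain ⟨y, hy⟩ := g.surj b
    obtain ⟨x, hx⟩ := f.surj y
    exact ⟨x, y, hx, hy⟩

/-- The identity shop `x ↦ {x}`. -/
def Shop.id : Shop D where
  f := fun x => {x}
  total := fun a => ⟨a, rfl⟩
  surj := fun b => ⟨b, rfl⟩

/-- Iterates of a shop: `pow f 0 = id` and `pow f (n+1) = f ∘ (pow f n)`. -/
def Shop.pow (f : Shop D) : ℕ → Shop D
  | 0 => Shop.id
  | n + 1 => Shop.comp f (f.pow n)

/-- `f` is `U`-surjective (a `U`-shop): `f(U) = D`. -/
def Shop.USurj (f : Shop D) (U : Set D) : Prop :=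
  ∀ b : D, ∃ u ∈ U, b ∈ f.f u

/-- `f` is `X`-total (an `X`-shop): `f⁻¹(X) = D`. -/
def Shop.XTotal (f : Shop D) (X : Set D) : Prop :=
  ∀ a : D, ∃ x ∈ X, x ∈ f.f a

end MC

namespace MC

/-- A down-shop-monoid (DSM): a set of shops containing the identity shop,
closed under composition, and closed under sub-shops. -/
def IsDSM {D : Type} (M : Set (Shop D)) : Prop :=
  Shop.id ∈ M ∧
  (∀ f ∈ M, ∀ g ∈ M, Shop.comp g f ∈ M) ∧
  ∀ f ∈ M, ∀ g : Shop D, (∀ x : D, g.f x ⊆ f.f x) → g ∈ M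

end MC

namespace MC

/-- In a DSM with minimal witnessing sets `U`, `X` (and maximal intersection),
the image of any element under any shop of the DSM contains at most one
element of `U`. -/
theorem image_meets_U_in_at_most_one {D : Type} [Finite D]
    (M : Set (Shop D)) (hM : IsDSM M) (U X : Set D)
    (hU : ∃ f ∈ M, f.USurj U) (hX : ∃ f ∈ M, f.XTotal X)
    (hUmin : ∀ U' : Set D, (∃ f ∈ M, f.USurj U') → U.ncard ≤ U'.ncard)
    (hXmin : ∀ X' : Set D, (∃ f ∈ M, f.XTotal X') → X.ncard ≤ X'.ncard)
    (hmax : ∀ U' X' : Set D, (∃ f ∈ M, f.USurj U') → (∃ f ∈ M, f.XTotal X') →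
      U'.ncard = U.ncard → X'.ncard = X.ncard →
      (U' ∩ X').ncard ≤ (U ∩ X).ncard) :
    ∀ f ∈ M, ∀ z : D, (f.f z ∩ U).ncard ≤ 1 := by
  classical
  intro f hf z
  by_contra hcard
  push_neg at hcard
  obtain ⟨u1, u2, hu1, hu2, hne⟩ := (Set.one_lt_ncard_iff (Set.toFinite _)).mp hcard
  obtain ⟨g, hgM, hgU⟩ := hU
  set a : D → D := fun u => if u = u1 ∨ u = u2 then z else Classical.choose (f.surj u)
    with ha
  have key : ∀ u ∈ U, u ∈ f.f (a u) := by
    intro u huU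
    by_cases h : u = u1 ∨ u = u2
    · have : a u = z := by simp [ha, h]
      rw [this]
      rcases h with h | h
      · rw [h]; exact hu1.1
      · rw [h]; exact hu2.1
    · have : a u = Classical.choose (f.surj u) := by simp [ha, h]
      rw [this]
      exact Classical.choose_spec (f.surj u)
  have hcompM : Shop.comp g f ∈ M := hM.2.1 f hf g hgM
  have hSurj : (Shop.comp g f).USurj (a '' U) := by
    intro b
    obtain ⟨u, huU, hb⟩ := hgU b
    exact ⟨a u, ⟨u, huU, rfl⟩, u, key u huU, hb⟩
  have hle := hUmin (a '' U) ⟨Shop.comp g f, hcompM, hSurj⟩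
  have himg : a '' U = a '' (U \ {u2}) := by
    apply subset_antisymm
    · rintro _ ⟨u, hu, rfl⟩
      by_cases h : u = u2
      · refine ⟨u1, ⟨hu1.2, hne⟩, ?_⟩
        have h1 : a u1 = z := by simp [ha]
        have h2 : a u = z := by simp [ha, h]
        rw [h1, h2]
      · exact ⟨u, ⟨hu, h⟩, rfl⟩
    · rintro _ ⟨u, hu, rfl⟩
      exact ⟨u, hu.1, rfl⟩
  have hlt : (a '' U).ncard < U.ncard := by
    rw [himg]
    calc (a '' (U \ {u2})).ncard ≤ (U \ {u2}).ncard :=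
          Set.ncard_image_le (Set.toFinite _)
      _ < U.ncard := Set.ncard_diff_singleton_lt_of_mem hu2.2 (Set.toFinite _)
  omega

end MC
end

section
/- Let D be a finite set, M a DSM on D, and U, X ⊆ D such that M contains a U-surjective shop and an X-total shop, |U| is minimal among cardinalities of subsets U' of D such that M contains a U'-surjective shop, |X| is minimal among cardinalities of subsets X' of D such that M contains an X'-total shop, and, subject to these minimality conditions, |U ∩ X| is maximal. Then for every U-surjective shop f ∈ M there exists a permutation α of U such that, for every u ∈ U: (i) f(u) ∩ U = {α(u)}; and (ii) f⁻¹(u) ∩ U = {α⁻¹(u)}. -/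
namespace MC


private lemma pow_mem {D : Type} {M : Set (Shop D)} (hM : IsDSM M)
    {F : Shop D} (hF : F ∈ M) : ∀ n, F.pow n ∈ M := by
  intro n
  induction n with
  | zero => exact hM.1
  | succ k ih => exact hM.2.1 (F.pow k) ih F hF

private lemma pow_add_mem {D : Type} (F : Shop D) (a b : ℕ) (x z : D) :
    z ∈ (F.pow (a + b)).f x ↔ ∃ y, y ∈ (F.pow b).f x ∧ z ∈ (F.pow a).f y := by
  induction a generalizing z with
  | zero =>
    simp only [Nat.zero_add]
    constructor
    · intro hz; exact ⟨z, hz, rfl⟩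
    · rintro ⟨y, hy, hz⟩
      have : z = y := hz
      rw [this]; exact hy
  | succ k ih =>
    have h : k + 1 + b = (k + b) + 1 := by omega
    rw [h]
    constructor
    · rintro ⟨y, hy, hz⟩
      obtain ⟨w, hw, hyw⟩ := (ih y).mp hy
      exact ⟨w, hw, y, hyw, hz⟩
    · rintro ⟨w, hw, y, hyw, hzy⟩
      exact ⟨y, (ih y).mpr ⟨w, hw, hyw⟩, hzy⟩

private lemma pow_usurj {D : Type} {F : Shop D} {U : Set D} (hFU : F.USurj U) :
    ∀ n, (F.pow (n + 1)).USurj U := by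
  intro n b
  obtain ⟨a, ha⟩ := (F.pow n).surj b
  obtain ⟨u, hu, hau⟩ := hFU a
  refine ⟨u, hu, ?_⟩
  exact (pow_add_mem F n 1 u b).mpr ⟨a, ⟨u, rfl, hau⟩, ha⟩

private lemma indeg {D : Type} [Finite D] {M : Set (Shop D)} {U : Set D}
    (hUmin : ∀ U' : Set D, (∃ f ∈ M, f.USurj U') → U.ncard ≤ U'.ncard)
    {g : Shop D} (hg : g ∈ M) (hgU : g.USurj U) :
    ∀ v ∈ U, ∃ u ∈ U, v ∈ g.f u := by
  have hB : g.USurj {v ∈ U | ∃ u ∈ U, v ∈ g.f u} := by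
    intro b
    obtain ⟨u, hu, hb⟩ := hgU b
    obtain ⟨u', hu', hu'u⟩ := hgU u
    exact ⟨u, ⟨hu, u', hu', hu'u⟩, hb⟩
  have hle := hUmin _ ⟨g, hg, hB⟩
  have heq : {v ∈ U | ∃ u ∈ U, v ∈ g.f u} = U :=
    Set.eq_of_subset_of_ncard_le (Set.sep_subset _ _) hle (Set.toFinite U)
  intro v hv
  have hv' : v ∈ {v ∈ U | ∃ u ∈ U, v ∈ g.f u} := heq.symm ▸ hv
  exact hv'.2

private lemma outdeg {D : Type} [Finite D] {M : Set (Shop D)} {U : Set D}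
    (hM : IsDSM M)
    (hUmin : ∀ U' : Set D, (∃ f ∈ M, f.USurj U') → U.ncard ≤ U'.ncard)
    {g : Shop D} (hg : g ∈ M) (hgU : g.USurj U) :
    ∀ u ∈ U, ∃ v ∈ U, v ∈ g.f u := by
  have hA : (Shop.comp g g).USurj {u ∈ U | ∃ v ∈ U, v ∈ g.f u} := by
    intro b
    obtain ⟨u, hu, hb⟩ := hgU b
    obtain ⟨u', hu', h'⟩ := indeg hUmin hg hgU u hu
    exact ⟨u', ⟨hu', u, hu, h'⟩, u, h', hb⟩
  have hle := hUmin _ ⟨_, hM.2.1 g hg g hg, hA⟩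
  have heq : {u ∈ U | ∃ v ∈ U, v ∈ g.f u} = U :=
    Set.eq_of_subset_of_ncard_le (Set.sep_subset _ _) hle (Set.toFinite U)
  intro u hu
  have hu' : u ∈ {u ∈ U | ∃ v ∈ U, v ∈ g.f u} := heq.symm ▸ hu
  exact hu'.2

/-- In a DSM with minimal witnessing sets `U`, `X` (and maximal intersection),
every `U`-surjective shop of the DSM permutes `U`: there is a permutation `α`
of `U` with `f(u) ∩ U = {α(u)}` and `f⁻¹(u) ∩ U = {α⁻¹(u)}` for all `u ∈ U`. -/
theorem Ushop_permutes_U {D : Type} [Finite D]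
    (M : Set (Shop D)) (hM : IsDSM M) (U X : Set D)
    (hU : ∃ f ∈ M, f.USurj U) (hX : ∃ f ∈ M, f.XTotal X)
    (hUmin : ∀ U' : Set D, (∃ f ∈ M, f.USurj U') → U.ncard ≤ U'.ncard)
    (hXmin : ∀ X' : Set D, (∃ f ∈ M, f.XTotal X') → X.ncard ≤ X'.ncard)
    (hmax : ∀ U' X' : Set D, (∃ f ∈ M, f.USurj U') → (∃ f ∈ M, f.XTotal X') →
      U'.ncard = U.ncard → X'.ncard = X.ncard →
      (U' ∩ X').ncard ≤ (U ∩ X).ncard) :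
    ∀ f ∈ M, f.USurj U → ∃ α : ↥U ≃ ↥U, ∀ u : ↥U,
      (f.f ↑u ∩ U = {(↑(α u) : D)}) ∧
      ({a : D | (u : D) ∈ f.f a} ∩ U = {(↑(α.symm u) : D)}) := by
  intro F hF hFU
  classical
  -- pigeonhole: two powers of F have the same underlying hyper-operation
  obtain ⟨i0, j0, hne, hij0⟩ :=
    Finite.exists_ne_map_eq_of_infinite (fun n : ℕ => (F.pow n).f)
  obtain ⟨i, j, hlt, hij⟩ : ∃ i j : ℕ, i < j ∧ (F.pow i).f = (F.pow j).f := by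
    rcases lt_or_gt_of_ne hne with h | h
    · exact ⟨i0, j0, h, hij0⟩
    · exact ⟨j0, i0, h, hij0.symm⟩
  set p := j - i with hp
  have hp0 : 0 < p := by omega
  have hji : i + p = j := by omega
  -- one-step shift
  have shift1 : ∀ d, (F.pow (d + i + p)).f = (F.pow (d + i)).f := by
    intro d
    funext x
    ext z
    have e1 : d + i + p = d + j := by omega
    rw [e1]
    constructor
    · intro hz
      obtain ⟨y, hy, hzy⟩ := (pow_add_mem F d j x z).mp hz
      have hy' : y ∈ (F.pow i).f x := by rw [hij]; exact hy
      exact (pow_add_mem F d i x z).mpr ⟨y, hy', hzy⟩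
    · intro hz
      obtain ⟨y, hy, hzy⟩ := (pow_add_mem F d i x z).mp hz
      have hy' : y ∈ (F.pow j).f x := by rw [← hij]; exact hy
      exact (pow_add_mem F d j x z).mpr ⟨y, hy', hzy⟩
  have shiftT : ∀ t d, (F.pow (d + i + p * t)).f = (F.pow (d + i)).f := by
    intro t
    induction t with
    | zero => intro d; simp
    | succ n ih =>
      intro d
      have e : d + i + p * (n + 1) = (d + p * n) + i + p := by ring
      rw [e, shift1 (d + p * n)]
      have e2 : d + p * n + i = d + i + p * n := by omega
      rw [e2, ih d]
  set m := p * (i + 2) with hm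
  have him : i + 2 ≤ m := by
    rw [hm]; exact Nat.le_mul_of_pos_left (i + 2) hp0
  have key : ∀ t, (F.pow (m + p * t)).f = (F.pow m).f := by
    intro t
    have e0 : m - i + i = m := by omega
    rw [← e0]
    exact shiftT t (m - i)
  have key2 : ∀ k, m ≤ k → p ∣ (k - m) → (F.pow k).f = (F.pow m).f := by
    intro k hk hd
    obtain ⟨t, ht⟩ := hd
    have hk' : k = m + (k - m) := by omega
    rw [hk', ht]
    exact key t
  have hdvd : p ∣ m := by rw [hm]; exact Dvd.intro _ rfl
  -- the three relevant powers
  have hE1 : (F.pow (m + m)).f = (F.pow m).f := by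
    refine key2 (m + m) (by omega) ?_
    have : m + m - m = m := by omega
    rw [this]; exact hdvd
  have hE2 : (F.pow ((m - 1) + (m + 1))).f = (F.pow m).f := by
    have e : (m - 1) + (m + 1) = m + m := by omega
    rw [e]; exact hE1
  have hE3 : (F.pow ((m + 1) + (m - 1))).f = (F.pow m).f := by
    have e : (m + 1) + (m - 1) = m + m := by omega
    rw [e]; exact hE1
  have heM : F.pow m ∈ M := pow_mem hM hF m
  have hsM : F.pow (m + 1) ∈ M := pow_mem hM hF (m + 1)
  have hs'M : F.pow (m - 1) ∈ M := pow_mem hM hF (m - 1)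
  have heU : (F.pow m).USurj U := by
    have e : m = (m - 1) + 1 := by omega
    rw [e]; exact pow_usurj hFU (m - 1)
  have hsU : (F.pow (m + 1)).USurj U := pow_usurj hFU m
  have hs'U : (F.pow (m - 1)).USurj U := by
    have e : m - 1 = (m - 2) + 1 := by omega
    rw [e]; exact pow_usurj hFU (m - 2)
  -- the idempotent power fixes U pointwise
  have heFix : ∀ u ∈ U, ∀ w, w ∈ (F.pow m).f u → w ∈ U → w = u := by
    intro u hu w hw hwU
    by_contra hne
    have hcov : (F.pow m).USurj (U \ {w}) := by
      intro b
      obtain ⟨v, hv, hb⟩ := heU b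
      by_cases hvw : v = w
      · refine ⟨u, ⟨hu, fun h => hne (Set.mem_singleton_iff.mp h).symm⟩, ?_⟩
        have hb2 : b ∈ (F.pow m).f w := by rw [← hvw]; exact hb
        have hb' : b ∈ (F.pow (m + m)).f u :=
          (pow_add_mem F m m u b).mpr ⟨w, hw, hb2⟩
        rw [hE1] at hb'; exact hb'
      · exact ⟨v, ⟨hv, hvw⟩, hb⟩
    have hle := hUmin _ ⟨F.pow m, heM, hcov⟩
    have hlt := Set.ncard_diff_singleton_lt_of_mem hwU (Set.toFinite U)
    omega
  have heRefl : ∀ u ∈ U, u ∈ (F.pow m).f u := by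
    intro u hu
    obtain ⟨u', hu', h⟩ := indeg hUmin heM heU u hu
    have := heFix u' hu' u h hu
    rw [← this] at h
    exact h
  -- the mutually-inverse pair on U
  have hdag : ∀ u ∈ U, ∀ v ∈ U, v ∈ (F.pow (m + 1)).f u →
      ∀ w, w ∈ (F.pow (m - 1)).f v → w ∈ U → w = u := by
    intro u hu v hv hvs w hw hwU
    have hwe : w ∈ (F.pow m).f u := by
      have : w ∈ (F.pow ((m - 1) + (m + 1))).f u :=
        (pow_add_mem F (m - 1) (m + 1) u w).mpr ⟨v, hvs, hw⟩
      rw [hE2] at this; exact this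
    exact heFix u hu w hwe hwU
  have hddag : ∀ v ∈ U, ∀ u ∈ U, u ∈ (F.pow (m - 1)).f v →
      ∀ w, w ∈ (F.pow (m + 1)).f u → w ∈ U → w = v := by
    intro v hv u hu hus w hw hwU
    have hwe : w ∈ (F.pow m).f v := by
      have : w ∈ (F.pow ((m + 1) + (m - 1))).f v :=
        (pow_add_mem F (m + 1) (m - 1) v w).mpr ⟨u, hus, hw⟩
      rw [hE3] at this; exact this
    exact heFix v hv w hwe hwU
  -- forward assignment
  have hA : ∀ u : ↥U, ∃ v : ↥U,
      (F.pow (m + 1)).f ↑u ∩ U = {(↑v : D)} ∧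
      (F.pow (m - 1)).f ↑v ∩ U = {(↑u : D)} := by
    intro u
    obtain ⟨v, hvU, hv⟩ := outdeg hM hUmin hsM hsU ↑u u.2
    have h1 : (F.pow (m - 1)).f v ∩ U = {(↑u : D)} := by
      obtain ⟨w, hwU, hw⟩ := outdeg hM hUmin hs'M hs'U v hvU
      have hwu : w = ↑u := hdag ↑u u.2 v hvU hv w hw hwU
      refine Set.eq_singleton_iff_unique_mem.mpr ⟨?_, ?_⟩
      · rw [← hwu]; exact ⟨hw, hwU⟩
      · rintro z ⟨hz1, hz2⟩; exact hdag ↑u u.2 v hvU hv z hz1 hz2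
    have hu_in : (↑u : D) ∈ (F.pow (m - 1)).f v := by
      have : (↑u : D) ∈ (F.pow (m - 1)).f v ∩ U := by rw [h1]; rfl
      exact this.1
    have h2 : (F.pow (m + 1)).f ↑u ∩ U = {(v : D)} := by
      refine Set.eq_singleton_iff_unique_mem.mpr ⟨⟨hv, hvU⟩, ?_⟩
      rintro z ⟨hz1, hz2⟩
      exact hddag v hvU ↑u u.2 hu_in z hz1 hz2
    exact ⟨⟨v, hvU⟩, h2, h1⟩
  -- backward assignment
  have hB : ∀ v : ↥U, ∃ u : ↥U,
      (F.pow (m - 1)).f ↑v ∩ U = {(↑u : D)} ∧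
      (F.pow (m + 1)).f ↑u ∩ U = {(↑v : D)} := by
    intro v
    obtain ⟨u, huU, hu⟩ := outdeg hM hUmin hs'M hs'U ↑v v.2
    have h1 : (F.pow (m + 1)).f u ∩ U = {(↑v : D)} := by
      obtain ⟨w, hwU, hw⟩ := outdeg hM hUmin hsM hsU u huU
      have hwv : w = ↑v := hddag ↑v v.2 u huU hu w hw hwU
      refine Set.eq_singleton_iff_unique_mem.mpr ⟨?_, ?_⟩
      · rw [← hwv]; exact ⟨hw, hwU⟩
      · rintro z ⟨hz1, hz2⟩; exact hddag ↑v v.2 u huU hu z hz1 hz2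
    have hv_in : (↑v : D) ∈ (F.pow (m + 1)).f u := by
      have : (↑v : D) ∈ (F.pow (m + 1)).f u ∩ U := by rw [h1]; rfl
      exact this.1
    have h2 : (F.pow (m - 1)).f ↑v ∩ U = {(u : D)} := by
      refine Set.eq_singleton_iff_unique_mem.mpr ⟨⟨hu, huU⟩, ?_⟩
      rintro z ⟨hz1, hz2⟩
      exact hdag u huU ↑v v.2 hv_in z hz1 hz2
    exact ⟨⟨u, huU⟩, h2, h1⟩
  choose A hA1 hA2 using hA
  choose B hB1 hB2 using hB
  have linv : Function.LeftInverse B A := by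
    intro u
    have h1 := hA2 u
    have h2 := hB1 (A u)
    rw [h1] at h2
    have : (↑u : D) = ↑(B (A u)) := by
      have : (↑(B (A u)) : D) ∈ ({(↑u : D)} : Set D) := by rw [h2]; rfl
      exact (this : (↑(B (A u)) : D) = ↑u).symm
    exact (Subtype.ext this).symm
  have rinv : Function.RightInverse B A := by
    intro v
    have h1 := hB2 v
    have h2 := hA1 (B v)
    rw [h1] at h2
    have : (↑v : D) = ↑(A (B v)) := by
      have : (↑(A (B v)) : D) ∈ ({(↑v : D)} : Set D) := by rw [h2]; rfl
      exact (this : (↑(A (B v)) : D) = ↑v).symm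
    exact (Subtype.ext this).symm
  refine ⟨⟨A, B, linv, rinv⟩, ?_⟩
  intro u
  -- F f u ⊆ s f u on U
  have hFs : ∀ a ∈ U, ∀ z, z ∈ F.f a → z ∈ (F.pow (m + 1)).f a := by
    intro a ha z hz
    have : z ∈ (F.pow (1 + m)).f a :=
      (pow_add_mem F 1 m a z).mpr ⟨a, heRefl a ha, a, rfl, hz⟩
    rwa [Nat.add_comm 1 m] at this
  constructor
  · -- image side
    show F.f ↑u ∩ U = {(↑(A u) : D)}
    have hsub : ∀ z, z ∈ F.f ↑u ∩ U → z = ↑(A u) := by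
      rintro z ⟨hz1, hz2⟩
      have : z ∈ (F.pow (m + 1)).f ↑u ∩ U := ⟨hFs ↑u u.2 z hz1, hz2⟩
      rw [hA1 u] at this
      exact this
    obtain ⟨w, hwU, hwF⟩ := outdeg hM hUmin hF hFU ↑u u.2
    have hww : w = ↑(A u) := hsub w ⟨hwF, hwU⟩
    refine Set.eq_singleton_iff_unique_mem.mpr ⟨?_, hsub⟩
    rw [← hww]; exact ⟨hwF, hwU⟩
  · -- preimage side
    show {a : D | (↑u : D) ∈ F.f a} ∩ U = {(↑(B u) : D)}
    have hsub : ∀ a, a ∈ U → (↑u : D) ∈ F.f a → a = ↑(B u) := by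
      intro a ha hf
      have h1 : (↑u : D) ∈ (F.pow (m + 1)).f a ∩ U := ⟨hFs a ha ↑u hf, u.2⟩
      rw [hA1 ⟨a, ha⟩] at h1
      have h2 : u = A ⟨a, ha⟩ := Subtype.ext h1
      have h3 : B u = ⟨a, ha⟩ := by rw [h2]; exact linv ⟨a, ha⟩
      rw [h3]
    obtain ⟨a, haU, hf⟩ := indeg hUmin hF hFU ↑u u.2
    have haB := hsub a haU hf
    refine Set.eq_singleton_iff_unique_mem.mpr ⟨?_, ?_⟩
    · rw [← haB]; exact ⟨hf, haU⟩
    · rintro z ⟨hz1, hz2⟩; exact hsub z hz2 hz1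

end MC
end

section
/- Let D be a finite set, M a DSM on D, and U, X ⊆ D such that M contains a U-surjective shop and an X-total shop, |U| is minimal among cardinalities of subsets U' of D such that M contains a U'-surjective shop, |X| is minimal among cardinalities of subsets X' of D such that M contains an X'-total shop, subject to these minimality conditions |U ∩ X| is maximal, and moreover U ∪ X = D (M is reduced). Then every shop f ∈ M is in 3-permuted form: there exist a permutation ζ of U ∩ X, a permutation χ of X \ U and a permutation υ of U \ X such that f(y) = {ζ(y)} for every y ∈ U ∩ X, f(x) = {χ(x)} for every x ∈ X \ U, and f(u) = {υ(u)} ∪ X_u with X_u ⊆ X \ U for every u ∈ U \ X. Moreover, every U-X-shop f ∈ M additionally satisfies f(U \ X) ∩ X = ⋃_{u ∈ U \ X} X_u = X \ U. -/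
namespace MC

/-!
Minimality of `|U|` forces every image `f(a)` to meet `U` in at most one point: otherwise a
choice of preimages would collapse `U` to a smaller set `U'` for which `s ∘ f` is
`U'`-surjective (`s ∈ M` being `U`-surjective). Inverting shops exchanges surjective and total
sets, and hence the roles of `U` and `X`; so dually, distinct points of `X` have disjoint
images. For a choice function `F` of `f` and an `X`-total `t ∈ M`, the shop `t ∘ f` is
`F(X)`-total with `|F(X)| = |X|`, so maximality of `|U ∩ X|` forces `X \ U ⊆ F(X)`; varying
`F` shows that `f` is single-valued on `X`. Sandwiching `f` between `U`-`X`-shops shows that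
`f` preserves `U ∩ X`, and counting does the rest. Every statement about `X` yields its
counterpart about `U` by inversion.
-/

open Set

variable {D : Type}

namespace Shop

@[ext]
theorem ext {f g : Shop D} (h : f.f = g.f) : f = g := by
  cases f; cases g; cases h; rfl

def inv (f : Shop D) : Shop D where
  f b := {a | b ∈ f.f a}
  total := f.surj
  surj := f.total

theorem inv_comp (g f : Shop D) : (comp g f).inv = comp f.inv g.inv := by
  ext a b
  exact ⟨fun ⟨y, hy, hb⟩ => ⟨y, hb, hy⟩, fun ⟨y, hy, hb⟩ => ⟨y, hb, hy⟩⟩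

theorem inv_id : (Shop.id : Shop D).inv = Shop.id := by
  ext a b
  exact eq_comm

noncomputable def pick (f : Shop D) (a : D) : D := (f.total a).some

theorem pick_mem (f : Shop D) (a : D) : f.pick a ∈ f.f a := (f.total a).some_mem

theorem USurj.comp {g : Shop D} {U : Set D} (hg : g.USurj U) (f : Shop D) :
    (comp f g).USurj U := fun b => by
  obtain ⟨y, hy⟩ := f.surj b
  obtain ⟨u, hu, hyu⟩ := hg y
  exact ⟨u, hu, y, hyu, hy⟩

theorem XTotal.comp {f : Shop D} {X : Set D} (hf : f.XTotal X) (g : Shop D) :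
    (comp f g).XTotal X := fun a => by
  obtain ⟨y, hy⟩ := g.total a
  obtain ⟨x, hx, hxy⟩ := hf y
  exact ⟨x, hx, y, hy, hxy⟩

end Shop

variable {M : Set (Shop D)} {U X : Set D} {f : Shop D}

theorem mem_inv_preimage (hf : f ∈ M) : f.inv ∈ Shop.inv ⁻¹' M := hf

theorem IsDSM.inv (hM : IsDSM M) : IsDSM (Shop.inv ⁻¹' M) := by
  obtain ⟨hid, hcomp, hsub⟩ := hM
  refine ⟨?_, fun f hf g hg => ?_, fun f hf g hgf => hsub _ hf _ fun x a ha => hgf a ha⟩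
  · rwa [mem_preimage, Shop.inv_id]
  · rw [mem_preimage, Shop.inv_comp]
    exact hcomp _ hg _ hf

theorem exists_mem_inv_preimage_usurj :
    (∃ f ∈ Shop.inv ⁻¹' M, f.USurj U) ↔ ∃ f ∈ M, f.XTotal U :=
  ⟨fun ⟨f, hf, hfU⟩ => ⟨f.inv, hf, hfU⟩, fun ⟨f, hf, hfU⟩ => ⟨f.inv, hf, hfU⟩⟩

theorem exists_mem_inv_preimage_xtotal :
    (∃ f ∈ Shop.inv ⁻¹' M, f.XTotal X) ↔ ∃ f ∈ M, f.USurj X :=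
  ⟨fun ⟨f, hf, hfX⟩ => ⟨f.inv, hf, hfX⟩, fun ⟨f, hf, hfX⟩ => ⟨f.inv, hf, hfX⟩⟩

section MinimalUSurj

variable [Finite D] (hM : IsDSM M) (hU : ∃ s ∈ M, s.USurj U)
  (hUmin : ∀ U' : Set D, (∃ f ∈ M, f.USurj U') → U.ncard ≤ U'.ncard)
include hM hU hUmin

theorem IsDSM.injOn_of_mem_apply (hf : f ∈ M) {c : D → D} (hc : ∀ v, v ∈ f.f (c v)) :
    InjOn c U := by
  obtain ⟨s, hs, hsU⟩ := hU
  have hcU : (Shop.comp s f).USurj (c '' U) := fun b => by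
    obtain ⟨v, hv, hbv⟩ := hsU b
    exact ⟨c v, mem_image_of_mem c hv, v, hc v, hbv⟩
  exact injOn_of_ncard_image_eq
    (le_antisymm (ncard_image_le (toFinite U)) (hUmin _ ⟨_, hM.2.1 f hf s hs, hcU⟩))

theorem IsDSM.inter_subsingleton (hf : f ∈ M) (a : D) : (f.f a ∩ U).Subsingleton := by
  classical
  intro u hu u' hu'
  have hc : ∀ v, v ∈ f.f (if v ∈ f.f a then a else f.inv.pick v) := fun v => by
    split_ifs with hv
    exacts [hv, f.inv.pick_mem v]
  exact hM.injOn_of_mem_apply hU hUmin hf hc hu.2 hu'.2 (by simp [hu.1, hu'.1])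

end MinimalUSurj

structure IsReducedPair (M : Set (Shop D)) (U X : Set D) : Prop where
  isDSM : IsDSM M
  exists_usurj : ∃ f ∈ M, f.USurj U
  exists_xtotal : ∃ f ∈ M, f.XTotal X
  usurj_min : ∀ U' : Set D, (∃ f ∈ M, f.USurj U') → U.ncard ≤ U'.ncard
  xtotal_min : ∀ X' : Set D, (∃ f ∈ M, f.XTotal X') → X.ncard ≤ X'.ncard
  inter_max : ∀ U' X' : Set D, (∃ f ∈ M, f.USurj U') → (∃ f ∈ M, f.XTotal X') →
    U'.ncard = U.ncard → X'.ncard = X.ncard → (U' ∩ X').ncard ≤ (U ∩ X).ncard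
  union_eq : U ∪ X = univ

namespace IsReducedPair

theorem inv (h : IsReducedPair M U X) : IsReducedPair (Shop.inv ⁻¹' M) X U where
  isDSM := h.isDSM.inv
  exists_usurj := exists_mem_inv_preimage_usurj.2 h.exists_xtotal
  exists_xtotal := exists_mem_inv_preimage_xtotal.2 h.exists_usurj
  usurj_min X' hX' := h.xtotal_min X' (exists_mem_inv_preimage_usurj.1 hX')
  xtotal_min U' hU' := h.usurj_min U' (exists_mem_inv_preimage_xtotal.1 hU')
  inter_max X' U' hX' hU' hXcard hUcard := by
    rw [inter_comm, inter_comm X]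
    exact h.inter_max U' X' (exists_mem_inv_preimage_xtotal.1 hU')
      (exists_mem_inv_preimage_usurj.1 hX') hUcard hXcard
  union_eq := by rw [union_comm, h.union_eq]

variable (h : IsReducedPair M U X)
include h

theorem mem_of_notMem {z : D} (hz : z ∉ U) : z ∈ X :=
  (h.union_eq ▸ mem_univ z : z ∈ U ∪ X).resolve_left hz

theorem exists_usurj_xtotal : ∃ g ∈ M, g.USurj U ∧ g.XTotal X := by
  obtain ⟨s, hs, hsU⟩ := h.exists_usurj
  obtain ⟨t, ht, htX⟩ := h.exists_xtotal
  exact ⟨_, h.isDSM.2.1 s hs t ht, hsU.comp t, htX.comp s⟩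

variable [Finite D]

theorem inter_subsingleton (hf : f ∈ M) (a : D) : (f.f a ∩ U).Subsingleton :=
  h.isDSM.inter_subsingleton h.exists_usurj h.usurj_min hf a

theorem inv_inter_subsingleton (hf : f ∈ M) (z : D) : (f.inv.f z ∩ X).Subsingleton :=
  h.inv.inter_subsingleton (mem_inv_preimage hf) z

theorem injOn_of_apply_mem (hf : f ∈ M) {F : D → D} (hF : ∀ v, F v ∈ f.f v) : InjOn F X :=
  fun x hx x' hx' hxx' => h.inv_inter_subsingleton hf (F x) ⟨hF x, hx⟩ ⟨hxx' ▸ hF x', hx'⟩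

theorem sdiff_subset_image (hf : f ∈ M) {F : D → D} (hF : ∀ v, F v ∈ f.f v) :
    X \ U ⊆ F '' X := by
  have hcard : (F '' X).ncard = X.ncard := (h.injOn_of_apply_mem hf hF).ncard_image
  obtain ⟨t, ht, htX⟩ := h.exists_xtotal
  have htot : (Shop.comp f t).XTotal (F '' X) := fun a => by
    obtain ⟨x, hx, hxa⟩ := htX a
    exact ⟨F x, mem_image_of_mem F hx, x, hxa, hF x⟩
  have hinter := h.inter_max U (F '' X) h.exists_usurj ⟨_, h.isDSM.2.1 t ht f hf, htot⟩ rfl hcard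
  have hsub : F '' X \ U ⊆ X \ U := fun z hz => ⟨h.mem_of_notMem hz.2, hz.2⟩
  have hsplit := ncard_inter_add_ncard_sdiff_eq_ncard (F '' X) U
  have hsplitX := ncard_inter_add_ncard_sdiff_eq_ncard X U
  rw [inter_comm] at hsplit hsplitX
  rw [← eq_of_subset_of_ncard_le hsub (by omega)]
  exact sdiff_subset

theorem eq_of_mem_apply_of_notMem (hf : f ∈ M) {x z z' : D} (hx : x ∈ X) (hz : z ∈ f.f x) (hzU : z ∉ U)
    (hz' : z' ∈ f.f x) : z' = z := by
  classical
  set F := Function.update f.pick x z'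
  have hF : ∀ v, F v ∈ f.f v := fun v => by
    rcases eq_or_ne v x with rfl | hv
    · simpa [F] using hz'
    · simpa [F, hv] using f.pick_mem v
  obtain ⟨x₁, hx₁, hzx₁⟩ := h.sdiff_subset_image hf hF ⟨h.mem_of_notMem hzU, hzU⟩
  obtain rfl : x₁ = x := h.inv_inter_subsingleton hf z ⟨hzx₁ ▸ hF x₁, hx₁⟩ ⟨hz, hx⟩
  simpa [F] using hzx₁

theorem apply_eq_singleton (hf : f ∈ M) {x : D} (hx : x ∈ X) : f.f x = {f.pick x} := by
  refine Subsingleton.eq_singleton_of_mem (fun z hz z' hz' => ?_) (f.pick_mem x)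
  by_cases hzU : z ∈ U
  · by_cases hz'U : z' ∈ U
    · exact h.inter_subsingleton hf x ⟨hz, hzU⟩ ⟨hz', hz'U⟩
    · exact h.eq_of_mem_apply_of_notMem hf hx hz' hz'U hz
  · exact (h.eq_of_mem_apply_of_notMem hf hx hz hzU hz').symm

theorem inv_apply_eq_singleton (hf : f ∈ M) {u : D} (hu : u ∈ U) :
    f.inv.f u = {f.inv.pick u} :=
  h.inv.apply_eq_singleton (mem_inv_preimage hf) hu

theorem bijOn_pick (hf : f ∈ M) (hfX : f.XTotal X) : BijOn f.pick X X := by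
  have hmaps : MapsTo f.pick X X := fun x hx => by
    obtain ⟨y, hy, hyx⟩ := hfX x
    rw [h.apply_eq_singleton hf hx, mem_singleton_iff] at hyx
    exact hyx ▸ hy
  exact ((toFinite X).injOn_iff_bijOn_of_mapsTo hmaps).1
    (h.injOn_of_apply_mem hf f.pick_mem)

theorem bijOn_inv_pick (hf : f ∈ M) (hfU : f.USurj U) : BijOn f.inv.pick U U :=
  h.inv.bijOn_pick (mem_inv_preimage hf) hfU

theorem pick_mem_inter_of_usurj_xtotal (hf : f ∈ M) (hfU : f.USurj U) (hfX : f.XTotal X)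
    {y : D} (hy : y ∈ U ∩ X) : f.pick y ∈ U ∩ X := by
  obtain ⟨u, hu, rfl⟩ := (h.bijOn_inv_pick hf hfU).surjOn hy.1
  have hmem : u ∈ f.f (f.inv.pick u) := f.inv.pick_mem u
  rw [h.apply_eq_singleton hf hy.2, mem_singleton_iff] at hmem
  exact ⟨hmem ▸ hu, (h.bijOn_pick hf hfX).mapsTo hy.2⟩

theorem inv_pick_mem_inter_of_usurj_xtotal (hf : f ∈ M) (hfU : f.USurj U) (hfX : f.XTotal X)
    {y : D} (hy : y ∈ U ∩ X) : f.inv.pick y ∈ U ∩ X :=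
  (h.inv.pick_mem_inter_of_usurj_xtotal (mem_inv_preimage hf) hfX hfU ⟨hy.2, hy.1⟩).symm

/-- Sandwiching `f` between a `U`-`X`-shop `g` gives a `U`-`X`-shop `g ∘ f ∘ g`, for which
`U ∩ X` is preserved in both directions. -/
theorem pick_mem_inter (hf : f ∈ M) {y : D} (hy : y ∈ U ∩ X) : f.pick y ∈ U ∩ X := by
  obtain ⟨g, hg, hgU, hgX⟩ := h.exists_usurj_xtotal
  have hgfg : Shop.comp g (Shop.comp f g) ∈ M := h.isDSM.2.1 _ (h.isDSM.2.1 g hg f hf) g hg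
  set y₀ := g.inv.pick y
  set z := g.pick (f.pick y)
  have hy₀ : y₀ ∈ U ∩ X := h.inv_pick_mem_inter_of_usurj_xtotal hg hgU hgX hy
  have hz : z ∈ (Shop.comp g (Shop.comp f g)).f y₀ :=
    ⟨f.pick y, ⟨y, g.inv.pick_mem y, f.pick_mem y⟩, g.pick_mem _⟩
  rw [h.apply_eq_singleton hgfg hy₀.2, mem_singleton_iff] at hz
  have hzUX : z ∈ U ∩ X := hz ▸ h.pick_mem_inter_of_usurj_xtotal hgfg
    ((hgU.comp f).comp g) (hgX.comp _) hy₀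
  have hfy : f.pick y ∈ g.inv.f z := g.pick_mem _
  rw [h.inv_apply_eq_singleton hg hzUX.1, mem_singleton_iff] at hfy
  exact hfy ▸ h.inv_pick_mem_inter_of_usurj_xtotal hg hgU hgX hzUX

theorem inv_pick_mem_inter (hf : f ∈ M) {y : D} (hy : y ∈ U ∩ X) : f.inv.pick y ∈ U ∩ X :=
  (h.inv.pick_mem_inter (mem_inv_preimage hf) ⟨hy.2, hy.1⟩).symm

theorem bijOn_pick_inter (hf : f ∈ M) : BijOn f.pick (U ∩ X) (U ∩ X) :=
  ((toFinite _).injOn_iff_bijOn_of_mapsTo fun _ => h.pick_mem_inter hf).1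
    ((h.injOn_of_apply_mem hf f.pick_mem).mono inter_subset_right)

theorem bijOn_pick_sdiff (hf : f ∈ M) : BijOn f.pick (X \ U) (X \ U) := by
  have hinj : InjOn f.pick (X \ U) := (h.injOn_of_apply_mem hf f.pick_mem).mono sdiff_subset
  have hsub : X \ U ⊆ f.pick '' (X \ U) := fun z hz => by
    obtain ⟨x, hx, rfl⟩ := h.sdiff_subset_image hf f.pick_mem hz
    exact ⟨x, ⟨hx, fun hxU => hz.2 (h.pick_mem_inter hf ⟨hxU, hx⟩).1⟩, rfl⟩
  have himage := eq_of_subset_of_ncard_le hsub (ncard_image_le (toFinite _))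
  simpa only [← himage] using hinj.bijOn_image

theorem bijOn_inv_pick_sdiff (hf : f ∈ M) : BijOn f.inv.pick (U \ X) (U \ X) :=
  h.inv.bijOn_pick_sdiff (mem_inv_preimage hf)

theorem exists_bijOn_sdiff_mem_apply (hf : f ∈ M) :
    ∃ υ : D → D, BijOn υ (U \ X) (U \ X) ∧ ∀ u ∈ U \ X, υ u ∈ f.f u := by
  rcases (U \ X).eq_empty_or_nonempty with hempty | ⟨u₀, -⟩
  · exact ⟨_root_.id, by simp [hempty]⟩
  have : Nonempty D := ⟨u₀⟩
  have hψ := h.bijOn_inv_pick_sdiff hf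
  refine ⟨Function.invFunOn f.inv.pick (U \ X), hψ.symm hψ.invOn_invFunOn.symm, fun u hu => ?_⟩
  have hmem := f.inv.pick_mem (Function.invFunOn f.inv.pick (U \ X) u)
  rwa [hψ.invOn_invFunOn.2 hu] at hmem

theorem eq_insert_inter_sdiff (hf : f ∈ M) {a w : D} (hw : w ∈ f.f a ∩ U) :
    f.f a = insert w (f.f a ∩ (X \ U)) := by
  ext z
  refine ⟨fun hz => ?_, fun hz => hz.elim (fun hzw => hzw ▸ hw.1) (·.1)⟩
  by_cases hzU : z ∈ U
  · exact Or.inl (h.inter_subsingleton hf a ⟨hz, hzU⟩ hw)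
  · exact Or.inr ⟨hz, h.mem_of_notMem hzU, hzU⟩

theorem exists_three_permuted_form (hf : f ∈ M) : ∃ ζ χ υ : D → D,
    BijOn ζ (U ∩ X) (U ∩ X) ∧ BijOn χ (X \ U) (X \ U) ∧ BijOn υ (U \ X) (U \ X) ∧
    (∀ y ∈ U ∩ X, f.f y = {ζ y}) ∧ (∀ x ∈ X \ U, f.f x = {χ x}) ∧
    (∀ u ∈ U \ X, ∃ Xu ⊆ X \ U, f.f u = insert (υ u) Xu) := by
  obtain ⟨υ, hυ, hυf⟩ := h.exists_bijOn_sdiff_mem_apply hf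
  refine ⟨f.pick, f.pick, υ, h.bijOn_pick_inter hf, h.bijOn_pick_sdiff hf, hυ,
    fun y hy => h.apply_eq_singleton hf hy.2, fun x hx => h.apply_eq_singleton hf hx.1,
    fun u hu => ⟨_, inter_subset_right, h.eq_insert_inter_sdiff hf ⟨hυf u hu, (hυ.mapsTo hu).1⟩⟩⟩

theorem biUnion_sdiff_inter_eq (hf : f ∈ M) (hfU : f.USurj U) :
    (⋃ u ∈ U \ X, f.f u) ∩ X = X \ U := by
  ext z
  simp only [mem_inter_iff, mem_iUnion₂, mem_sdiff, exists_prop]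
  refine ⟨fun ⟨⟨u, hu, hzu⟩, hzX⟩ => ⟨hzX, fun hzU => hu.2 ?_⟩, fun ⟨hzX, hzU⟩ => ?_⟩
  · have hu' : u ∈ f.inv.f z := hzu
    rw [h.inv_apply_eq_singleton hf hzU, mem_singleton_iff] at hu'
    exact (hu' ▸ h.inv_pick_mem_inter hf ⟨hzU, hzX⟩).2
  · obtain ⟨w, hwU, hzw⟩ := hfU z
    refine ⟨⟨w, ⟨hwU, fun hwX => hzU ?_⟩, hzw⟩, hzX⟩
    rw [h.apply_eq_singleton hf hwX, mem_singleton_iff] at hzw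
    exact (hzw ▸ h.pick_mem_inter hf ⟨hwU, hwX⟩).1

end IsReducedPair

/-- In a reduced DSM (`U ∪ X = D`), every shop is in 3-permuted form, and every
`U`-`X`-shop additionally covers `X \ U` from `U \ X`. -/
theorem reduced_DSM_three_permuted_form {D : Type} [Finite D]
    (M : Set (Shop D)) (hM : IsDSM M) (U X : Set D)
    (hU : ∃ f ∈ M, f.USurj U) (hX : ∃ f ∈ M, f.XTotal X)
    (hUmin : ∀ U' : Set D, (∃ f ∈ M, f.USurj U') → U.ncard ≤ U'.ncard)
    (hXmin : ∀ X' : Set D, (∃ f ∈ M, f.XTotal X') → X.ncard ≤ X'.ncard)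
    (hmax : ∀ U' X' : Set D, (∃ f ∈ M, f.USurj U') → (∃ f ∈ M, f.XTotal X') →
      U'.ncard = U.ncard → X'.ncard = X.ncard →
      (U' ∩ X').ncard ≤ (U ∩ X).ncard)
    (hred : U ∪ X = Set.univ) :
    (∀ f ∈ M, ∃ ζ χ υ : D → D,
      Set.BijOn ζ (U ∩ X) (U ∩ X) ∧
      Set.BijOn χ (X \ U) (X \ U) ∧
      Set.BijOn υ (U \ X) (U \ X) ∧
      (∀ y ∈ U ∩ X, f.f y = {ζ y}) ∧
      (∀ x ∈ X \ U, f.f x = {χ x}) ∧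
      (∀ u ∈ U \ X, ∃ Xu ⊆ X \ U, f.f u = insert (υ u) Xu)) ∧
    (∀ f ∈ M, f.USurj U → f.XTotal X →
      (⋃ u ∈ U \ X, f.f u) ∩ X = X \ U) := by
  have h : IsReducedPair M U X := ⟨hM, hU, hX, hUmin, hXmin, hmax, hred⟩
  exact ⟨fun f hf => h.exists_three_permuted_form hf, fun f hf hfU _ => h.biUnion_sdiff_inter_eq hf hfU⟩

end MC
end

section
/- Let D be a finite set and M a DSM on D. Suppose (U, X) and (U', X') are two pairs of subsets of D each satisfying: M contains a U-surjective shop and an X-total shop (respectively for U', X'), |U| (resp. |U'|) is minimal among cardinalities of subsets of D over which M contains a surjective shop, |X| (resp. |X'|) is minimal among cardinalities of subsets of D over which M contains a total shop, subject to these minimality conditions the intersection |U ∩ X| (resp. |U' ∩ X'|) is maximal, and U ∪ X = D = U' ∪ X'. Then U = U' and X = X'. -/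
/-!
Shops on a finite set form a finite semigroup under composition, so every nonempty
composition-closed family of shops in `M` contains an idempotent, hence transitive, shop.
For a transitive shop, no element `u` of a minimum-size set `U` over which it is surjective is
reached from another element of `U`, since otherwise `U \ {u}` would do; so such a shop that is
also `X`-total for a minimum `X` is reflexive on `U ∪ X = D`. Composing reflexive shops for
`(U, X)` and `(U', X')` and taking an idempotent again yields a transitive `T ∈ M` that is `U`-
and `U'`-surjective and `X`- and `X'`-total. Maximality of `|U ∩ X|` forces `V ∪ Y = D` for every
such pair `(V, Y)` of sizes `(|U|, |X|)`. If `u ∈ U` is reached from `u' ∈ U'` with `u' ≠ u`,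
then `u' ∉ U`; exchanging `u'` in `U'` for an element of `U` reaching it gives such a `V` missing
`u'`, so `u' ∈ X`, and exchanging `u'` in `X` for `u` gives a `Y` with `u' ∉ V ∪ Y`. Hence
`U ⊆ U'`, dually `X ⊆ X'`, and the cardinalities agree.
-/

open Set

theorem exists_mul_self_eq_of_finite {S : Type*} [Semigroup S] [Finite S] {s : Set S}
    (hs : s.Nonempty) (hmul : ∀ x ∈ s, ∀ y ∈ s, x * y ∈ s) : ∃ e ∈ s, e * e = e := by
  let : TopologicalSpace S := ⊥
  have : DiscreteTopology S := ⟨rfl⟩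
  exact exists_idempotent_in_compact_subsemigroup (fun _ => continuous_of_discreteTopology)
    s hs s.toFinite.isCompact hmul

theorem Set.union_eq_univ_of_ncard_inter_le {α : Type*} [Finite α] {U X V Y : Set α}
    (hUX : U ∪ X = univ) (hV : V.ncard = U.ncard) (hY : Y.ncard = X.ncard)
    (hVY : (V ∩ Y).ncard ≤ (U ∩ X).ncard) : V ∪ Y = univ := by
  have hUX' := ncard_union_add_ncard_inter U X
  have hVY' := ncard_union_add_ncard_inter V Y
  rw [hUX] at hUX'
  exact eq_of_subset_of_ncard_le (subset_univ _) (by omega)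

theorem Set.ncard_insert_sdiff_singleton_le {α : Type*} [Finite α] {s : Set α} {b : α}
    (a : α) (hb : b ∈ s) : (insert a (s \ {b})).ncard ≤ s.ncard :=
  (ncard_insert_le _ _).trans (ncard_sdiff_singleton_add_one hb).le

namespace MC

variable {D : Type}

namespace Shop

attribute [ext] Shop

instance : Mul (Shop D) := ⟨comp⟩

theorem mem_mul {f g : Shop D} {x z : D} : z ∈ (g * f).f x ↔ ∃ y ∈ f.f x, z ∈ g.f y :=
  Iff.rfl

instance : Semigroup (Shop D) where
  mul_assoc h g f := by
    ext x z
    simp only [mem_mul]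
    exact ⟨fun ⟨a, ha, b, hb, hz⟩ => ⟨b, ⟨a, ha, hb⟩, hz⟩,
      fun ⟨b, ⟨a, ha, hb⟩, hz⟩ => ⟨a, ha, b, hb, hz⟩⟩

instance [Finite D] : Finite (Shop D) :=
  Finite.of_injective Shop.f fun _ _ => Shop.ext

-- `T⁻¹.USurj X` and `T⁻¹.XTotal U` unfold to `T.XTotal X` and `T.USurj U`: this is how the
-- statements about totality below are obtained from those about surjectivity.
instance : Inv (Shop D) where
  inv f :=
    { f := fun b => {a | b ∈ f.f a}
      total := fun b => f.surj b
      surj := fun a => f.total a }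

def IsReflexive (f : Shop D) : Prop :=
  ∀ a, a ∈ f.f a

def IsTransitive (f : Shop D) : Prop :=
  ∀ ⦃a b c⦄, b ∈ f.f a → c ∈ f.f b → c ∈ f.f a

def IsUXShop (f : Shop D) (U X : Set D) : Prop :=
  f.USurj U ∧ f.XTotal X

variable {f g T : Shop D} {U X V : Set D}

theorem isTransitive_of_mul_self_eq (h : f * f = f) : f.IsTransitive :=
  fun _ _ _ hb hc => h ▸ mem_mul.2 ⟨_, hb, hc⟩

theorem IsTransitive.inv (hT : T.IsTransitive) : T⁻¹.IsTransitive :=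
  fun _ _ _ hb hc => hT hc hb

theorem USurj.mul_left (hf : f.USurj U) (g : Shop D) : (g * f).USurj U := fun b => by
  obtain ⟨y, hy⟩ := g.surj b
  obtain ⟨u, hu, hyu⟩ := hf y
  exact ⟨u, hu, y, hyu, hy⟩

theorem XTotal.mul_right (hg : g.XTotal X) (f : Shop D) : (g * f).XTotal X := fun a => by
  obtain ⟨y, hy⟩ := f.total a
  obtain ⟨x, hx, hxy⟩ := hg y
  exact ⟨x, hx, y, hy, hxy⟩

theorem USurj.mul_right_of_isReflexive (hg : g.USurj U) (hf : f.IsReflexive) :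
    (g * f).USurj U := fun b => by
  obtain ⟨u, hu, hb⟩ := hg b
  exact ⟨u, hu, u, hf u, hb⟩

theorem XTotal.mul_left_of_isReflexive (hf : f.XTotal X) (hg : g.IsReflexive) :
    (g * f).XTotal X := fun a => by
  obtain ⟨x, hx, hxa⟩ := hf a
  exact ⟨x, hx, x, hxa, hg x⟩

theorem IsUXShop.mul (hg : g.IsUXShop U X) (hf : f.IsUXShop U X) : (g * f).IsUXShop U X :=
  ⟨hf.1.mul_left g, hg.2.mul_right f⟩

theorem IsTransitive.usurj_insert_diff (hT : T.IsTransitive) (hV : T.USurj V) {v w : D}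
    (hvw : v ∈ T.f w) : T.USurj (insert w (V \ {v})) := fun b => by
  obtain ⟨u, hu, hbu⟩ := hV b
  by_cases huv : u = v
  · exact ⟨w, mem_insert _ _, hT hvw (huv ▸ hbu)⟩
  · exact ⟨u, mem_insert_of_mem _ ⟨hu, huv⟩, hbu⟩

theorem IsTransitive.eq_of_mem_of_usurj_min [Finite D] (hT : T.IsTransitive) (hU : T.USurj U)
    (hUmin : ∀ V, T.USurj V → U.ncard ≤ V.ncard) {u v : D} (hu : u ∈ U) (hv : v ∈ U)
    (huv : u ∈ T.f v) : v = u := by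
  by_contra hne
  have hcov := hT.usurj_insert_diff hU huv
  rw [insert_eq_of_mem (show v ∈ U \ {u} from ⟨hv, hne⟩)] at hcov
  exact (ncard_sdiff_singleton_lt_of_mem hu).not_ge (hUmin _ hcov)

theorem IsTransitive.self_mem_of_usurj_min [Finite D] (hT : T.IsTransitive) (hU : T.USurj U)
    (hUmin : ∀ V, T.USurj V → U.ncard ≤ V.ncard) {u : D} (hu : u ∈ U) : u ∈ T.f u := by
  obtain ⟨v, hv, huv⟩ := hU u
  rwa [hT.eq_of_mem_of_usurj_min hU hUmin hu hv huv] at huv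

theorem IsTransitive.isReflexive [Finite D] (hT : T.IsTransitive) (hU : T.USurj U)
    (hX : T.XTotal X) (hUmin : ∀ V, T.USurj V → U.ncard ≤ V.ncard)
    (hXmin : ∀ Y, T.XTotal Y → X.ncard ≤ Y.ncard) (hUX : U ∪ X = univ) : T.IsReflexive := fun a => by
  rcases hUX.symm ▸ mem_univ a with ha | ha
  · exact hT.self_mem_of_usurj_min hU hUmin ha
  · exact hT.inv.self_mem_of_usurj_min (U := X) hX hXmin ha

theorem IsTransitive.subset_of_usurj [Finite D] (hT : T.IsTransitive) (hU : T.USurj U)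
    (hX : T.XTotal X) (hUmin : ∀ V, T.USurj V → U.ncard ≤ V.ncard)
    (hXmin : ∀ Y, T.XTotal Y → X.ncard ≤ Y.ncard)
    (hmax : ∀ V Y, T.USurj V → T.XTotal Y → V.ncard = U.ncard → Y.ncard = X.ncard →
      (V ∩ Y).ncard ≤ (U ∩ X).ncard)
    (hUX : U ∪ X = univ) {U' : Set D} (hU' : T.USurj U') (hU'c : U'.ncard ≤ U.ncard) :
    U ⊆ U' := by
  intro u hu
  obtain ⟨u', hu', huu'⟩ := hU' u
  by_contra hnot
  have hne : u' ≠ u := fun h => hnot (h ▸ hu')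
  have hu'U : u' ∉ U := fun h => hne (hT.eq_of_mem_of_usurj_min hU hUmin hu h huu')
  obtain ⟨w, hw, hu'w⟩ := hU u'
  set V := insert w (U' \ {u'})
  have hV : T.USurj V := hT.usurj_insert_diff hU' hu'w
  have hVc : V.ncard = U.ncard :=
    le_antisymm ((ncard_insert_sdiff_singleton_le w hu').trans hU'c) (hUmin V hV)
  have hu'V : u' ∉ V := by
    rintro (h | h)
    · exact hu'U (h ▸ hw)
    · exact h.2 rfl
  have hunion : ∀ Y, T.XTotal Y → Y.ncard = X.ncard → V ∪ Y = univ := fun Y hY hYc =>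
    union_eq_univ_of_ncard_inter_le hUX hVc hYc (hmax V Y hV hY hVc hYc)
  have hu'X : u' ∈ X := ((hunion X hX rfl).symm ▸ mem_univ u').resolve_left hu'V
  set Y := insert u (X \ {u'})
  have hY : T.XTotal Y := hT.inv.usurj_insert_diff hX huu'
  have hYc : Y.ncard = X.ncard :=
    le_antisymm (ncard_insert_sdiff_singleton_le u hu'X) (hXmin Y hY)
  have hu'Y : u' ∉ Y := by
    rintro (h | h)
    · exact hne h
    · exact h.2 rfl
  exact ((hunion Y hY hYc).symm ▸ mem_univ u').elim hu'V hu'Y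

theorem IsTransitive.subset_of_xtotal [Finite D] (hT : T.IsTransitive) (hU : T.USurj U)
    (hX : T.XTotal X) (hUmin : ∀ V, T.USurj V → U.ncard ≤ V.ncard)
    (hXmin : ∀ Y, T.XTotal Y → X.ncard ≤ Y.ncard)
    (hmax : ∀ V Y, T.USurj V → T.XTotal Y → V.ncard = U.ncard → Y.ncard = X.ncard →
      (V ∩ Y).ncard ≤ (U ∩ X).ncard)
    (hUX : U ∪ X = univ) {X' : Set D} (hX' : T.XTotal X') (hX'c : X'.ncard ≤ X.ncard) :
    X ⊆ X' :=
  hT.inv.subset_of_usurj (U := X) (X := U) hX hU hXmin hUmin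
    (fun V Y hV hY hVc hYc => by
      rw [inter_comm, inter_comm X]
      exact hmax Y V hY hV hYc hVc)
    (by rwa [union_comm]) hX' hX'c

end Shop

variable {M : Set (Shop D)} {U X : Set D}

theorem IsDSM.exists_isTransitive [Finite D] (hM : IsDSM M) {P : Shop D → Prop}
    (hP : ∀ f g, P f → P g → P (g * f)) (hne : ∃ f ∈ M, P f) :
    ∃ T ∈ M, T.IsTransitive ∧ P T := by
  obtain ⟨T, ⟨hTM, hTP⟩, hT⟩ := exists_mul_self_eq_of_finite (s := {f ∈ M | P f}) hne
    fun f hf g hg => ⟨hM.2.1 g hg.1 f hf.1, hP g f hg.2 hf.2⟩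
  exact ⟨T, hTM, Shop.isTransitive_of_mul_self_eq hT, hTP⟩

theorem IsDSM.exists_isReflexive [Finite D] (hM : IsDSM M) (hU : ∃ f ∈ M, f.USurj U)
    (hX : ∃ f ∈ M, f.XTotal X) (hUmin : ∀ V : Set D, (∃ f ∈ M, f.USurj V) → U.ncard ≤ V.ncard)
    (hXmin : ∀ Y : Set D, (∃ f ∈ M, f.XTotal Y) → X.ncard ≤ Y.ncard) (hUX : U ∪ X = univ) :
    ∃ e ∈ M, e.IsReflexive ∧ e.IsUXShop U X := by
  obtain ⟨f, hfM, hf⟩ := hU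
  obtain ⟨g, hgM, hg⟩ := hX
  obtain ⟨e, heM, he, heU, heX⟩ := hM.exists_isTransitive (P := (·.IsUXShop U X))
    (fun _ _ hf hg => hg.mul hf) ⟨g * f, hM.2.1 f hfM g hgM, hf.mul_left g, hg.mul_right f⟩
  exact ⟨e, heM, he.isReflexive heU heX (fun V hV => hUmin V ⟨e, heM, hV⟩)
    (fun Y hY => hXmin Y ⟨e, heM, hY⟩) hUX, heU, heX⟩

end MC

namespace MC

theorem reduced_DSM_UX_unique_general {D : Type} [Finite D]
    (M : Set (Shop D)) (hM : IsDSM M) (U X U' X' : Set D)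
    (hU : ∃ f ∈ M, f.USurj U) (hX : ∃ f ∈ M, f.XTotal X)
    (hUmin : ∀ V : Set D, (∃ f ∈ M, f.USurj V) → U.ncard ≤ V.ncard)
    (hXmin : ∀ Y : Set D, (∃ f ∈ M, f.XTotal Y) → X.ncard ≤ Y.ncard)
    (hmax : ∀ V Y : Set D, (∃ f ∈ M, f.USurj V) → (∃ f ∈ M, f.XTotal Y) →
      V.ncard = U.ncard → Y.ncard = X.ncard →
      (V ∩ Y).ncard ≤ (U ∩ X).ncard)
    (hred : U ∪ X = Set.univ)
    (hU' : ∃ f ∈ M, f.USurj U') (hX' : ∃ f ∈ M, f.XTotal X')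
    (hUmin' : ∀ V : Set D, (∃ f ∈ M, f.USurj V) → U'.ncard ≤ V.ncard)
    (hXmin' : ∀ Y : Set D, (∃ f ∈ M, f.XTotal Y) → X'.ncard ≤ Y.ncard)
    (hred' : U' ∪ X' = Set.univ) :
    U = U' ∧ X = X' := by
  obtain ⟨e, heM, he, heU, heX⟩ := hM.exists_isReflexive hU hX hUmin hXmin hred
  obtain ⟨e', he'M, he', he'U', he'X'⟩ := hM.exists_isReflexive hU' hX' hUmin' hXmin' hred'
  obtain ⟨T, hTM, hT, ⟨hTU, hTX⟩, hTU', hTX'⟩ := hM.exists_isTransitive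
    (P := fun f => f.IsUXShop U X ∧ f.IsUXShop U' X')
    (fun _ _ hf hg => ⟨hg.1.mul hf.1, hg.2.mul hf.2⟩)
    ⟨e' * e, hM.2.1 e heM e' he'M, ⟨heU.mul_left e', heX.mul_left_of_isReflexive he'⟩,
      ⟨he'U'.mul_right_of_isReflexive he, he'X'.mul_right e⟩⟩
  have hTUmin : ∀ V, T.USurj V → U.ncard ≤ V.ncard := fun V hV => hUmin V ⟨T, hTM, hV⟩
  have hTXmin : ∀ Y, T.XTotal Y → X.ncard ≤ Y.ncard := fun Y hY => hXmin Y ⟨T, hTM, hY⟩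
  have hTmax := fun V Y (hV : T.USurj V) (hY : T.XTotal Y) => hmax V Y ⟨T, hTM, hV⟩ ⟨T, hTM, hY⟩
  have hUU' := hT.subset_of_usurj hTU hTX hTUmin hTXmin hTmax hred hTU' (hUmin' U hU)
  have hXX' := hT.subset_of_xtotal hTU hTX hTUmin hTXmin hTmax hred hTX' (hXmin' X hX)
  exact ⟨eq_of_subset_of_ncard_le hUU' (hUmin' U hU),
    eq_of_subset_of_ncard_le hXX' (hXmin' X hX)⟩

/-- In a reduced DSM, the witnessing sets `U` and `X` are unique. -/
theorem reduced_DSM_UX_unique {D : Type} [Finite D]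
    (M : Set (Shop D)) (hM : IsDSM M) (U X U' X' : Set D)
    (hU : ∃ f ∈ M, f.USurj U) (hX : ∃ f ∈ M, f.XTotal X)
    (hUmin : ∀ V : Set D, (∃ f ∈ M, f.USurj V) → U.ncard ≤ V.ncard)
    (hXmin : ∀ Y : Set D, (∃ f ∈ M, f.XTotal Y) → X.ncard ≤ Y.ncard)
    (hmax : ∀ V Y : Set D, (∃ f ∈ M, f.USurj V) → (∃ f ∈ M, f.XTotal Y) →
      V.ncard = U.ncard → Y.ncard = X.ncard →
      (V ∩ Y).ncard ≤ (U ∩ X).ncard)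
    (hred : U ∪ X = Set.univ)
    (hU' : ∃ f ∈ M, f.USurj U') (hX' : ∃ f ∈ M, f.XTotal X')
    (hUmin' : ∀ V : Set D, (∃ f ∈ M, f.USurj V) → U'.ncard ≤ V.ncard)
    (hXmin' : ∀ Y : Set D, (∃ f ∈ M, f.XTotal Y) → X'.ncard ≤ Y.ncard)
    (hmax' : ∀ V Y : Set D, (∃ f ∈ M, f.USurj V) → (∃ f ∈ M, f.XTotal Y) →
      V.ncard = U'.ncard → Y.ncard = X'.ncard →
      (V ∩ Y).ncard ≤ (U' ∩ X').ncard)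
    (hred' : U' ∪ X' = Set.univ) :
    U = U' ∧ X = X' :=
  reduced_DSM_UX_unique_general M hM U X U' X' hU hX hUmin hXmin hmax hred hU' hX' hUmin' hXmin'
    hred'

end MC
end
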